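/- arXiv:math/0005087 — 7 statements merged into one kernel-verified Lean document; each statement's English description precedes it below -/
import Mathlib

section
/- For every integer n ≥ 1, the product of ideals ∏_{i=1}^n J̃_{0i} is contained in the intersection ⋂_{0 ≤ r < s ≤ n} J̃_{rs} in the quotient ring T_n/J^{(2)}_{0n}. -/
open scoped TensorProduct
open PiTensorProduct

noncomputable section

variable (R B : Type*) [CommRing R] [CommRing B] [Algebra R B]

/-- The `(n+1)`-fold tensor power `B ⊗_R ⋯ ⊗_R B`, with factors indexed by `Fin (n+1)`. -/
abbrev TT (n : ℕ) : Type _ := ⨂[R] _ : Fin (n + 1), B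

/-- `d^{r,s} b = (1 ⊗ ⋯ ⊗ b ⊗ ⋯ ⊗ 1) - (1 ⊗ ⋯ ⊗ b ⊗ ⋯ ⊗ 1)`, with `b` in position `s`
(resp. `r`) in the two elementary tensors. -/
def dd (n : ℕ) (r s : Fin (n + 1)) (b : B) : TT R B n :=
  tprod R (fun i => if i = s then b else 1) - tprod R (fun i => if i = r then b else 1)

/-- The ideal `J_{rs}` generated by the elements `d^{r,s} b`. -/
def Jrs (n : ℕ) (r s : Fin (n + 1)) : Ideal (TT R B n) :=
  Ideal.span {x | ∃ b : B, x = dd R B n r s b}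

/-- The ideal `J^{(2)}_{0n} = Σ_{0 ≤ r < s ≤ n} J_{rs}²`. -/
def Jsq (n : ℕ) : Ideal (TT R B n) :=
  ⨆ (r : Fin (n + 1)) (s : Fin (n + 1)) (_ : r < s), (Jrs R B n r s) ^ 2

/-- The image `J̃_{rs}` of the ideal `J_{rs}` in the quotient ring `T_n / J^{(2)}_{0n}`. -/
def Jt (n : ℕ) (r s : Fin (n + 1)) : Ideal (TT R B n ⧸ Jsq R B n) :=
  (Jrs R B n r s).map (Ideal.Quotient.mk (Jsq R B n))

lemma sq_le_Jsq (n : ℕ) (r s : Fin (n + 1)) (h : r < s) :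
    (Jrs R B n r s) ^ 2 ≤ Jsq R B n :=
  le_iSup_of_le r (le_iSup_of_le s (le_iSup_of_le h le_rfl))

lemma mul_le_add (n : ℕ) (r s : Fin (n + 1)) (hr : (0 : Fin (n+1)) < r) (hrs : r < s) :
    Jrs R B n 0 r * Jrs R B n 0 s ≤ Jrs R B n r s + Jsq R B n := by
  rw [Jrs, Jrs, Ideal.span_mul_span, Ideal.span_le]
  rintro x hx
  simp only [Set.mem_mul, Set.mem_setOf_eq] at hx
  obtain ⟨a, ⟨α, rfl⟩, b, ⟨β, rfl⟩, rfl⟩ := hx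
  have hdecomp : dd R B n 0 s β = dd R B n r s β + dd R B n 0 r β := by
    simp only [dd]
    exact (sub_add_sub_cancel _ _ _).symm
  have : dd R B n 0 r α * dd R B n 0 s β =
      dd R B n 0 r α * dd R B n r s β + dd R B n 0 r α * dd R B n 0 r β := by
    rw [hdecomp, mul_add]
  rw [this]
  refine Submodule.add_mem _ ?_ ?_
  · exact Submodule.mem_sup_left
      (Ideal.mul_mem_left _ _ (Ideal.subset_span ⟨β, rfl⟩))
  · refine Submodule.mem_sup_right (sq_le_Jsq R B n 0 r hr ?_)
    rw [sq]
    exact Ideal.mul_mem_mul (Ideal.subset_span ⟨α, rfl⟩) (Ideal.subset_span ⟨β, rfl⟩)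

lemma Jt_mul_le (n : ℕ) (r s : Fin (n + 1)) (hr : (0 : Fin (n+1)) < r) (hrs : r < s) :
    Jt R B n 0 r * Jt R B n 0 s ≤ Jt R B n r s := by
  rw [Jt, Jt, Jt, ← Ideal.map_mul]
  calc (Jrs R B n 0 r * Jrs R B n 0 s).map (Ideal.Quotient.mk (Jsq R B n))
      ≤ (Jrs R B n r s + Jsq R B n).map (Ideal.Quotient.mk (Jsq R B n)) :=
        Ideal.map_mono (mul_le_add R B n r s hr hrs)
    _ = (Jrs R B n r s).map (Ideal.Quotient.mk (Jsq R B n)) ⊔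
        (Jsq R B n).map (Ideal.Quotient.mk (Jsq R B n)) := Ideal.map_sup _ _ _
    _ = (Jrs R B n r s).map (Ideal.Quotient.mk (Jsq R B n)) := by
        rw [Ideal.map_quotient_self, sup_bot_eq]

/-- `∏_{i=1}^n J̃_{0i} ⊆ ⋂_{0 ≤ r < s ≤ n} J̃_{rs}` in `T_n / J^{(2)}_{0n}`. -/
theorem stmt3 (n : ℕ) (hn : 1 ≤ n) :
    ∏ i ∈ Finset.Ioi (0 : Fin (n + 1)), Jt R B n 0 i ≤
      ⨅ (r : Fin (n + 1)) (s : Fin (n + 1)) (_ : r < s), Jt R B n r s := by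
  simp only [le_iInf_iff]
  intro r s hrs
  rcases eq_or_ne r 0 with rfl | hr0
  · calc ∏ i ∈ Finset.Ioi (0 : Fin (n + 1)), Jt R B n 0 i
        ≤ (Finset.Ioi (0 : Fin (n + 1))).inf (Jt R B n 0) := Ideal.prod_le_inf
      _ ≤ Jt R B n 0 s := Finset.inf_le (Finset.mem_Ioi.mpr hrs)
  · have hr : (0 : Fin (n+1)) < r := Fin.pos_of_ne_zero hr0
    have hrI : r ∈ Finset.Ioi (0 : Fin (n + 1)) := Finset.mem_Ioi.mpr hr
    have hsI : s ∈ (Finset.Ioi (0 : Fin (n + 1))).erase r :=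
      Finset.mem_erase.mpr ⟨hrs.ne', Finset.mem_Ioi.mpr (hr.trans hrs)⟩
    calc ∏ i ∈ Finset.Ioi (0 : Fin (n + 1)), Jt R B n 0 i
        = Jt R B n 0 r * ∏ i ∈ (Finset.Ioi (0 : Fin (n + 1))).erase r, Jt R B n 0 i :=
          (Finset.mul_prod_erase _ _ hrI).symm
      _ ≤ Jt R B n 0 r * Jt R B n 0 s := by
          refine Ideal.mul_mono_right ?_
          calc ∏ i ∈ (Finset.Ioi (0 : Fin (n + 1))).erase r, Jt R B n 0 i
              ≤ ((Finset.Ioi (0 : Fin (n + 1))).erase r).inf (Jt R B n 0) := Ideal.prod_le_inf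
            _ ≤ Jt R B n 0 s := Finset.inf_le hsI
      _ ≤ Jt R B n r s := Jt_mul_le R B n r s hr hrs

end
end

section
/- For every integer n ≥ 1, the products of ideals ∏_{i=0}^{n-1} J̃_{i,i+1} and ∏_{i=1}^{n} J̃_{0i} in the quotient ring T_n/J^{(2)}_{0n} are equal. -/
open scoped TensorProduct
open PiTensorProduct

noncomputable section

variable (R B : Type*) [CommRing R] [CommRing B] [Algebra R B]

lemma dd_add (n : ℕ) (r s t : Fin (n + 1)) (b : B) :
    dd R B n r t b = dd R B n r s b + dd R B n s t b := by
  unfold dd; abel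

lemma dd_symm (n : ℕ) (r s : Fin (n + 1)) (b : B) :
    dd R B n r s b = - dd R B n s r b := by
  unfold dd; abel

lemma Jrs_symm (n : ℕ) (r s : Fin (n + 1)) : Jrs R B n r s = Jrs R B n s r := by
  have h : ∀ r s : Fin (n + 1), Jrs R B n r s ≤ Jrs R B n s r := by
    intro r s
    rw [Jrs, Ideal.span_le]
    rintro x ⟨b, rfl⟩
    rw [dd_symm]
    exact neg_mem (Ideal.subset_span ⟨b, rfl⟩)
  exact le_antisymm (h r s) (h s r)

lemma Jrs_self (n : ℕ) (r : Fin (n + 1)) : Jrs R B n r r = ⊥ := by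
  rw [Jrs, Ideal.span_eq_bot]
  rintro x ⟨b, rfl⟩
  simp [dd]

lemma Jrs_le (n : ℕ) (r s t : Fin (n + 1)) :
    Jrs R B n r t ≤ Jrs R B n r s ⊔ Jrs R B n s t := by
  rw [Jrs, Ideal.span_le]
  rintro x ⟨b, rfl⟩
  rw [dd_add R B n r s t b]
  exact add_mem (Ideal.mem_sup_left (Ideal.subset_span ⟨b, rfl⟩))
    (Ideal.mem_sup_right (Ideal.subset_span ⟨b, rfl⟩))

lemma Jrs_sq_le (n : ℕ) (r s : Fin (n + 1)) (h : r ≠ s) :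
    Jrs R B n r s ^ 2 ≤ Jsq R B n := by
  rcases h.lt_or_gt with h | h
  · exact le_iSup_of_le r (le_iSup_of_le s (le_iSup_of_le h le_rfl))
  · rw [Jrs_symm]
    exact le_iSup_of_le s (le_iSup_of_le r (le_iSup_of_le h le_rfl))

lemma Jt_sq (n : ℕ) (r s : Fin (n + 1)) (h : r ≠ s) : Jt R B n r s ^ 2 = ⊥ := by
  rw [Jt, ← Ideal.map_pow]
  rw [← le_bot_iff]
  calc (Jrs R B n r s ^ 2).map (Ideal.Quotient.mk (Jsq R B n))
      ≤ (Jsq R B n).map (Ideal.Quotient.mk (Jsq R B n)) := Ideal.map_mono (Jrs_sq_le R B n r s h)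
    _ = ⊥ := Ideal.map_quotient_self _

lemma Jt_symm (n : ℕ) (r s : Fin (n + 1)) : Jt R B n r s = Jt R B n s r := by
  rw [Jt, Jt, Jrs_symm]

lemma Jt_self (n : ℕ) (r : Fin (n + 1)) : Jt R B n r r = ⊥ := by
  rw [Jt, Jrs_self, Ideal.map_bot]

lemma Jt_le (n : ℕ) (r s t : Fin (n + 1)) :
    Jt R B n r t ≤ Jt R B n r s ⊔ Jt R B n s t := by
  rw [Jt, Jt, Jt, ← Ideal.map_sup]
  exact Ideal.map_mono (Jrs_le R B n r s t)

open Fin.NatCast in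
lemma key (n k : ℕ) (hk : k ≤ n) :
    ∏ i ∈ Finset.range k, Jt R B n (i : Fin (n+1)) ((i+1 : ℕ) : Fin (n+1))
      = ∏ i ∈ Finset.range k, Jt R B n 0 ((i+1 : ℕ) : Fin (n+1)) := by
  induction k with
  | zero => simp
  | succ k ih =>
    have hk' : k ≤ n := Nat.le_of_succ_le hk
    rw [Finset.prod_range_succ, Finset.prod_range_succ, ih hk']
    set Q := ∏ i ∈ Finset.range k, Jt R B n 0 ((i+1 : ℕ) : Fin (n+1)) with hQ
    -- Q * J̃_{0,k} = ⊥
    have hzero : Q * Jt R B n 0 ((k : ℕ) : Fin (n+1)) = ⊥ := by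
      rcases Nat.eq_zero_or_pos k with rfl | hkpos
      · simp [Jt_self]
      · have hkn : ((k : ℕ) : Fin (n+1)) ≠ 0 := by
          have hlt : (k : ℕ) < n + 1 := by omega
          intro hc
          have hv : (((k : ℕ) : Fin (n+1)) : ℕ) = 0 := by rw [hc]; rfl
          rw [Fin.val_cast_of_lt hlt] at hv
          omega
        have hQle : Q ≤ Jt R B n 0 ((k : ℕ) : Fin (n+1)) := by
          obtain ⟨m, rfl⟩ : ∃ m, k = m + 1 := ⟨k - 1, by omega⟩
          rw [hQ, Finset.prod_range_succ]
          exact Ideal.mul_le_right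
        rw [← le_bot_iff]
        calc Q * Jt R B n 0 ((k : ℕ) : Fin (n+1))
            ≤ Jt R B n 0 ((k : ℕ) : Fin (n+1)) * Jt R B n 0 ((k : ℕ) : Fin (n+1)) :=
              Ideal.mul_mono_left hQle
          _ = Jt R B n 0 ((k : ℕ) : Fin (n+1)) ^ 2 := by rw [sq]
          _ = ⊥ := Jt_sq R B n _ _ (Ne.symm hkn)
    apply le_antisymm
    · calc Q * Jt R B n ((k : ℕ) : Fin (n+1)) ((k+1 : ℕ) : Fin (n+1))
          ≤ Q * (Jt R B n ((k : ℕ) : Fin (n+1)) 0 ⊔ Jt R B n 0 ((k+1 : ℕ) : Fin (n+1))) :=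
            Ideal.mul_mono_right (Jt_le R B n _ _ _)
        _ = Q * Jt R B n ((k : ℕ) : Fin (n+1)) 0 ⊔ Q * Jt R B n 0 ((k+1 : ℕ) : Fin (n+1)) :=
            Ideal.mul_sup _ _ _
        _ ≤ Q * Jt R B n 0 ((k+1 : ℕ) : Fin (n+1)) := by
            rw [Jt_symm, hzero, bot_sup_eq]
    · calc Q * Jt R B n 0 ((k+1 : ℕ) : Fin (n+1))
          ≤ Q * (Jt R B n 0 ((k : ℕ) : Fin (n+1)) ⊔ Jt R B n ((k : ℕ) : Fin (n+1)) ((k+1 : ℕ) : Fin (n+1))) :=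
            Ideal.mul_mono_right (Jt_le R B n _ _ _)
        _ = Q * Jt R B n 0 ((k : ℕ) : Fin (n+1)) ⊔ Q * Jt R B n ((k : ℕ) : Fin (n+1)) ((k+1 : ℕ) : Fin (n+1)) :=
            Ideal.mul_sup _ _ _
        _ ≤ Q * Jt R B n ((k : ℕ) : Fin (n+1)) ((k+1 : ℕ) : Fin (n+1)) := by
            rw [hzero, bot_sup_eq]

open Fin.NatCast in
/-- `∏_{i=0}^{n-1} J̃_{i,i+1} = ∏_{i=1}^{n} J̃_{0i}` in `T_n / J^{(2)}_{0n}`. -/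
theorem stmt4 (n : ℕ) (hn : 1 ≤ n) :
    ∏ i : Fin n, Jt R B n i.castSucc i.succ
      = ∏ i ∈ Finset.Ioi (0 : Fin (n + 1)), Jt R B n 0 i := by
  have h1 : ∏ i : Fin n, Jt R B n i.castSucc i.succ
      = ∏ i ∈ Finset.range n, Jt R B n (i : Fin (n+1)) ((i+1 : ℕ) : Fin (n+1)) := by
    rw [← Fin.prod_univ_eq_prod_range (fun i => Jt R B n (i : Fin (n+1)) ((i+1 : ℕ) : Fin (n+1))) n]
    apply Finset.prod_congr rfl
    intro i _
    congr 1
    · ext; simp [Fin.val_cast_of_lt (Nat.lt_succ_of_lt i.isLt)]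
    · ext; simp [Fin.val_cast_of_lt (Nat.succ_lt_succ i.isLt)]
  have h2 : ∏ i ∈ Finset.Ioi (0 : Fin (n + 1)), Jt R B n 0 i
      = ∏ i ∈ Finset.range n, Jt R B n 0 ((i+1 : ℕ) : Fin (n+1)) := by
    rw [Fin.prod_Ioi_zero]
    rw [← Fin.prod_univ_eq_prod_range (fun i => Jt R B n 0 ((i+1 : ℕ) : Fin (n+1))) n]
    apply Finset.prod_congr rfl
    intro i _
    congr 1
    ext; simp [Fin.val_cast_of_lt (Nat.succ_lt_succ i.isLt), Fin.val_succ]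
  rw [h1, h2]
  exact key R B n n le_rfl


end
end

section
/- For all integers m, n ≥ 1 and all elements b₁, …, b_{m+n} ∈ B, the equality ∏_{i=1}^{m} d^{0,i}bᵢ · ∏_{j=1}^{n} d^{m,m+j}b_{m+j} = ∏_{i=1}^{m+n} d^{0,i}bᵢ holds in the quotient ring T_{m+n}/J^{(2)}_{0,m+n}. -/
open scoped TensorProduct
open PiTensorProduct
open Fin.NatCast

noncomputable section

variable (R B : Type*) [CommRing R] [CommRing B] [Algebra R B]

lemma prod_sub_prod_mem {A : Type*} [CommRing A] {I : Ideal A} {ι : Type*} (s : Finset ι)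
    (f g : ι → A) (h : ∀ j ∈ s, f j - g j ∈ I) :
    (∏ j ∈ s, f j) - ∏ j ∈ s, g j ∈ I := by
  classical
  induction s using Finset.induction with
  | empty => simp
  | @insert a s ha ih =>
    rw [Finset.prod_insert ha, Finset.prod_insert ha]
    have h1 : f a - g a ∈ I := h a (Finset.mem_insert_self a s)
    have h2 : (∏ j ∈ s, f j) - ∏ j ∈ s, g j ∈ I :=
      ih fun j hj => h j (Finset.mem_insert_of_mem hj)
    have : f a * ∏ j ∈ s, f j - g a * ∏ j ∈ s, g j
        = (f a - g a) * ∏ j ∈ s, f j + g a * ((∏ j ∈ s, f j) - ∏ j ∈ s, g j) := by ring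
    rw [this]
    exact I.add_mem (I.mul_mem_right _ h1) (I.mul_mem_left _ h2)

/-- for `m, n ≥ 1` and `b₁, …, b_{m+n} ∈ B`,
`∏_{i=1}^{m} d^{0,i}bᵢ · ∏_{j=1}^{n} d^{m,m+j}b_{m+j} = ∏_{i=1}^{m+n} d^{0,i}bᵢ`
holds in `T_{m+n}/J^{(2)}_{0,m+n}`. -/
theorem stmt10 (m n : ℕ) (hm : 1 ≤ m) (hn : 1 ≤ n) (b : ℕ → B) :
    Ideal.Quotient.mk (Jsq R B (m + n))
        ((∏ i ∈ Finset.Icc 1 m, dd R B (m + n) 0 (i : Fin (m + n + 1)) (b i)) *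
          ∏ j ∈ Finset.Icc 1 n,
            dd R B (m + n) (m : Fin (m + n + 1)) ((m + j : ℕ) : Fin (m + n + 1)) (b (m + j)))
      = Ideal.Quotient.mk (Jsq R B (m + n))
          (∏ i ∈ Finset.Icc 1 (m + n), dd R B (m + n) 0 (i : Fin (m + n + 1)) (b i)) := by
  classical
  set N := m + n with hN
  set J := Jrs R B N 0 (m : Fin (N + 1)) with hJ
  -- the first product lies in J
  have hmem : dd R B N 0 (m : Fin (N + 1)) (b m) ∈ J :=
    Ideal.subset_span ⟨b m, rfl⟩
  have hA : (∏ i ∈ Finset.Icc 1 m, dd R B N 0 (i : Fin (N + 1)) (b i)) ∈ J := by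
    rw [← Finset.mul_prod_erase _ _ (Finset.mem_Icc.mpr ⟨hm, le_refl m⟩)]
    exact J.mul_mem_right _ hmem
  -- the difference of the two second products lies in J
  have hPQ : (∏ j ∈ Finset.Icc 1 n,
        dd R B N (m : Fin (N + 1)) ((m + j : ℕ) : Fin (N + 1)) (b (m + j))) -
      ∏ j ∈ Finset.Icc 1 n, dd R B N 0 ((m + j : ℕ) : Fin (N + 1)) (b (m + j)) ∈ J := by
    refine prod_sub_prod_mem _ _ _ fun j _ => ?_
    have : dd R B N (m : Fin (N + 1)) ((m + j : ℕ) : Fin (N + 1)) (b (m + j)) -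
        dd R B N 0 ((m + j : ℕ) : Fin (N + 1)) (b (m + j))
        = -(dd R B N 0 (m : Fin (N + 1)) (b (m + j))) := by
      simp only [dd]; abel
    rw [this]
    exact J.neg_mem (Ideal.subset_span ⟨b (m + j), rfl⟩)
  -- 0 < m as elements of Fin (N+1)
  have hmlt : (m : ℕ) < N + 1 := by omega
  have hlt : (0 : Fin (N + 1)) < (m : Fin (N + 1)) := by
    rw [Fin.lt_def]
    simp [Fin.val_cast_of_lt hmlt]
    omega
  have hle : J ^ 2 ≤ Jsq R B N := by
    exact le_iSup_of_le 0 (le_iSup_of_le ((m : Fin (N+1))) (le_iSup_of_le hlt le_rfl))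
  -- reduce to showing equality with the `d^{0,m+j}` product
  rw [Ideal.Quotient.eq]
  have hdiff : (∏ i ∈ Finset.Icc 1 m, dd R B N 0 (i : Fin (N + 1)) (b i)) *
        (∏ j ∈ Finset.Icc 1 n,
          dd R B N (m : Fin (N + 1)) ((m + j : ℕ) : Fin (N + 1)) (b (m + j))) -
      (∏ i ∈ Finset.Icc 1 m, dd R B N 0 (i : Fin (N + 1)) (b i)) *
        (∏ j ∈ Finset.Icc 1 n, dd R B N 0 ((m + j : ℕ) : Fin (N + 1)) (b (m + j)))
      ∈ Jsq R B N := by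
    rw [← mul_sub]
    exact hle (by rw [sq]; exact Ideal.mul_mem_mul hA hPQ)
  -- rewrite the right-hand side product
  have hsplit : (∏ i ∈ Finset.Icc 1 N, dd R B N 0 (i : Fin (N + 1)) (b i))
      = (∏ i ∈ Finset.Icc 1 m, dd R B N 0 (i : Fin (N + 1)) (b i)) *
        (∏ j ∈ Finset.Icc 1 n, dd R B N 0 ((m + j : ℕ) : Fin (N + 1)) (b (m + j))) := by
    have h1 : Finset.Icc 1 N = Finset.Ioc 0 N := by
      rw [← Finset.Icc_add_one_left_eq_Ioc]; rfl
    have h2 : Finset.Icc 1 m = Finset.Ioc 0 m := by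
      rw [← Finset.Icc_add_one_left_eq_Ioc]; rfl
    rw [h1, h2, ← Finset.prod_Ioc_consecutive _ (Nat.zero_le m) (by omega : m ≤ N)]
    congr 1
    have hmap : Finset.Ioc m N = (Finset.Icc 1 n).map (addLeftEmbedding m) := by
      rw [Finset.map_add_left_Icc]
      rw [← Finset.Icc_add_one_left_eq_Ioc]
    rw [hmap, Finset.prod_map]
    rfl
  rw [hsplit]
  exact hdiff

end
end

section
/- For every integer n ≥ 1, all indices 1 ≤ r < s ≤ n and every b ∈ B, the element 2 · d^{0,r}b · d^{0,s}b of T_n lies in the ideal J^{(2)}_{0n}. Consequently, every element of the quotient J^{⟨2⟩}_{0n}/J^{(2)}_{0n} is killed by multiplication by 2. -/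
open scoped TensorProduct
open PiTensorProduct

noncomputable section

variable (R B : Type*) [CommRing R] [CommRing B] [Algebra R B]

/-- The ideal `J_n` generated by the products `d^{0,r}b · d^{0,s}b` for `1 ≤ r < s ≤ n`. -/
def Jdiag (n : ℕ) : Ideal (TT R B n) :=
  Ideal.span {x | ∃ (r s : Fin (n + 1)) (b : B),
    0 < r ∧ r < s ∧ x = dd R B n 0 r b * dd R B n 0 s b}

/-- The ideal `J^{⟨2⟩}_{0n} = J^{(2)}_{0n} + J_n`. -/
def Jsq' (n : ℕ) : Ideal (TT R B n) := Jsq R B n + Jdiag R B n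

/-- The image `J̃_{rs}` of the ideal `J_{rs}` in the quotient ring `T_n / J^{⟨2⟩}_{0n}`. -/
def Jt' (n : ℕ) (r s : Fin (n + 1)) : Ideal (TT R B n ⧸ Jsq' R B n) :=
  (Jrs R B n r s).map (Ideal.Quotient.mk (Jsq' R B n))

/-- for `1 ≤ r < s ≤ n` and `b ∈ B`, `2·d^{0,r}b·d^{0,s}b ∈ J^{(2)}_{0n}`;
consequently every element of `J^{⟨2⟩}_{0n}/J^{(2)}_{0n}` is killed by multiplication by 2. -/
theorem stmt11 (n : ℕ) (hn : 1 ≤ n) :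
    (∀ r s : Fin (n + 1), 0 < r → r < s → ∀ b : B,
        2 * (dd R B n 0 r b * dd R B n 0 s b) ∈ Jsq R B n) ∧
      ∀ x ∈ Jsq' R B n, 2 * x ∈ Jsq R B n := by
  have hmem : ∀ (r s : Fin (n + 1)) (b : B), dd R B n r s b ∈ Jrs R B n r s :=
    fun r s b => Ideal.subset_span ⟨b, rfl⟩
  have hsub : ∀ r s : Fin (n + 1), r < s → (Jrs R B n r s) ^ 2 ≤ Jsq R B n :=
    fun r s h => le_iSup_of_le r (le_iSup_of_le s (le_iSup_of_le h le_rfl))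
  have key : ∀ r s : Fin (n + 1), 0 < r → r < s → ∀ b : B,
      2 * (dd R B n 0 r b * dd R B n 0 s b) ∈ Jsq R B n := by
    intro r s hr hrs b
    have e : dd R B n r s b = dd R B n 0 s b - dd R B n 0 r b := by
      unfold dd; abel
    have id2 : 2 * (dd R B n 0 r b * dd R B n 0 s b) =
        dd R B n 0 r b ^ 2 + dd R B n 0 s b ^ 2 - dd R B n r s b ^ 2 := by
      rw [e]; ring
    rw [id2]
    exact sub_mem
      (add_mem (hsub 0 r hr (Ideal.pow_mem_pow (hmem _ _ b) 2))
        (hsub 0 s (hr.trans hrs) (Ideal.pow_mem_pow (hmem _ _ b) 2)))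
      (hsub r s hrs (Ideal.pow_mem_pow (hmem _ _ b) 2))
  refine ⟨key, ?_⟩
  intro x hx
  obtain ⟨y, hy, z, hz, rfl⟩ := Submodule.mem_sup.mp hx
  have h2z : 2 * z ∈ Jsq R B n := by
    refine Submodule.span_induction ?_ ?_ ?_ ?_ hz
    · rintro x ⟨r, s, b, hr, hrs, rfl⟩; exact key r s hr hrs b
    · simp
    · intro a b _ _ ha hb; rw [mul_add]; exact add_mem ha hb
    · intro c a _ ha
      rw [smul_eq_mul, mul_left_comm]
      exact Ideal.mul_mem_left _ _ ha
  have : 2 * (y + z) = 2 * y + 2 * z := by ring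
  rw [this]
  exact add_mem (Ideal.mul_mem_left _ _ hy) h2z


end
end

section
/- For every integer n ≥ 1, the equalities of ideals ∏_{i=1}^{n} J̃_{0i} = ∏_{i=0}^{n-1} J̃_{i,i+1} = ⋂_{0 ≤ r < s ≤ n} J̃_{rs} hold in the quotient ring T_n/J^{⟨2⟩}_{0n}. -/
open scoped TensorProduct
open PiTensorProduct

noncomputable section

variable (R B : Type*) [CommRing R] [CommRing B] [Algebra R B]

namespace Aux13

/-! ### Generic ideal lemmas -/

lemma prod_span {A ι : Type*} [CommRing A] (t : Finset ι) (S : ι → Set A) :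
    (∏ i ∈ t, Ideal.span (S i)) =
      Ideal.span {x | ∃ f : ι → A, (∀ i ∈ t, f i ∈ S i) ∧ x = ∏ i ∈ t, f i} := by
  classical
  induction t using Finset.induction with
  | empty =>
    have h : {x : A | ∃ f : ι → A, (∀ i ∈ (∅ : Finset ι), f i ∈ S i) ∧ x = ∏ i ∈ (∅ : Finset ι), f i}
        = {1} := by
      ext x
      constructor
      · rintro ⟨f, -, rfl⟩; simp
      · rintro rfl; exact ⟨fun _ => 1, by simp, by simp⟩
    rw [Finset.prod_empty, h, Ideal.span_singleton_one]
    exact Ideal.one_eq_top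
  | insert a t ha ih =>
    rw [Finset.prod_insert ha, ih, Ideal.span_mul_span']
    congr 1
    ext x
    constructor
    · rintro ⟨u, hu, v, ⟨f, hf, rfl⟩, rfl⟩
      refine ⟨Function.update f a u, ?_, ?_⟩
      · intro i hi
        rcases Finset.mem_insert.mp hi with rfl | hit
        · simpa using hu
        · have hia : i ≠ a := by rintro rfl; exact ha hit
          simpa [Function.update_of_ne hia] using hf i hit
      · rw [Finset.prod_insert ha, Function.update_self]
        congr 1
        refine (Finset.prod_congr rfl ?_).symm
        intro i hi
        exact Function.update_of_ne (by rintro rfl; exact ha hi) _ _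
    · rintro ⟨f, hf, rfl⟩
      rw [Finset.prod_insert ha]
      exact ⟨f a, hf a (Finset.mem_insert_self a t), ∏ i ∈ t, f i,
        ⟨f, fun i hi => hf i (Finset.mem_insert_of_mem hi), rfl⟩, rfl⟩

lemma span_fixed {A : Type*} [CommRing A] (f : A →+* A) (G : Set A)
    (hfix : ∀ g ∈ G, f g = g) : ∀ x ∈ Ideal.span G, f x ∈ Ideal.span G := by
  intro x hx
  induction hx using Submodule.span_induction with
  | mem g hg => rw [hfix g hg]; exact Ideal.subset_span hg
  | zero => simp
  | add x y _ _ hx hy => rw [map_add]; exact add_mem hx hy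
  | smul a x _ hx =>
    rw [smul_eq_mul, _root_.map_mul]
    exact Ideal.mul_mem_left _ _ hx

lemma diff_mem_mul {A : Type*} [CommRing A] (f : A →+* A) (K : Ideal A)
    (hK : ∀ x, x - f x ∈ K) (G : Set A) (hfix : ∀ g ∈ G, f g = g) :
    ∀ q ∈ Ideal.span G, q - f q ∈ K * Ideal.span G := by
  intro q hq
  induction hq using Submodule.span_induction with
  | mem g hg => rw [hfix g hg, sub_self]; exact zero_mem _
  | zero => simp
  | add x y _ _ hx hy =>
    have : x + y - f (x + y) = (x - f x) + (y - f y) := by rw [map_add]; ring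
    rw [this]; exact add_mem hx hy
  | smul a x hxmem hx =>
    have : a • x - f (a • x) = a * (x - f x) + (a - f a) * f x := by
      rw [smul_eq_mul, _root_.map_mul]; ring
    rw [this]
    exact add_mem (Ideal.mul_mem_left _ _ hx)
      (Ideal.mul_mem_mul (hK a) (span_fixed f G hfix x hxmem))

lemma prod_le_of_mem {A ι : Type*} [CommRing A] [DecidableEq ι] (t : Finset ι)
    (F : ι → Ideal A) {a : ι} (ha : a ∈ t) : (∏ i ∈ t, F i) ≤ F a := by
  rw [← Finset.mul_prod_erase _ _ ha]
  exact Ideal.mul_le_left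

/-! ### Elementary tensors and basic computations -/

variable {R B} {n : ℕ}

/-- elementary tensor with `b` in slot `j`. -/
def ee (j : Fin (n + 1)) (b : B) : TT R B n :=
  tprod R (fun i => if i = j then b else 1)

lemma dd_eq (r s : Fin (n + 1)) (b : B) : dd R B n r s b = ee s b - ee r b := rfl

lemma ee_eq_update (j : Fin (n + 1)) (b : B) :
    ee j b = tprod R (Function.update (fun _ => (1 : B)) j b) := by
  unfold ee; congr 1; funext i; simp [Function.update_apply]

lemma ee_one (j : Fin (n + 1)) : ee (R := R) (B := B) j 1 = 1 := by
  unfold ee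
  have : (fun i : Fin (n+1) => if i = j then (1:B) else 1) = (fun _ => (1:B)) := by
    funext i; simp
  rw [this]; rfl

lemma ee_add (j : Fin (n + 1)) (b c : B) :
    ee (R := R) j (b + c) = ee j b + ee j c := by
  rw [ee_eq_update, ee_eq_update, ee_eq_update, MultilinearMap.map_update_add]

lemma ee_smul (j : Fin (n + 1)) (r : R) (b : B) :
    ee (R := R) (B := B) j (r • b) = r • ee j b := by
  rw [ee_eq_update, ee_eq_update, MultilinearMap.map_update_smul]

lemma ee_mul (j : Fin (n+1)) (b c : B) : ee (R := R) j b * ee j c = ee j (b * c) := by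
  unfold ee; rw [tprod_mul_tprod]; congr 1; funext i; by_cases h : i = j <;> simp [h]

/-- `ee j` as a linear map. -/
def eeLin (j : Fin (n + 1)) : B →ₗ[R] TT R B n where
  toFun := ee j
  map_add' := ee_add j
  map_smul' := ee_smul j

lemma eeLin_apply (j : Fin (n+1)) (b : B) : eeLin (R := R) j b = ee j b := rfl

lemma prod_ee (t : Finset (Fin (n + 1))) (g : Fin (n + 1) → B) :
    (∏ j ∈ t, ee (R := R) j (g j)) = tprod R (fun i => if i ∈ t then g i else 1) := by
  classical
  induction t using Finset.induction with
  | empty => simp; rfl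
  | insert a t ha ih =>
    rw [Finset.prod_insert ha, ih]
    unfold ee
    rw [tprod_mul_tprod]
    congr 1; funext i
    by_cases h1 : i = a
    · subst h1; simp [ha]
    · simp [h1]

lemma tprod_eq_prod (g : Fin (n + 1) → B) :
    tprod R g = ∏ j, ee (R := R) j (g j) := by
  rw [prod_ee]; simp

/-! ### The slot-collapsing endomorphisms -/

/-- The algebra endomorphism of `TT` induced by a map of slots `σ`:
slot `j` content is sent to slot `σ j`. -/
def psi (σ : Fin (n + 1) → Fin (n + 1)) : TT R B n →ₐ[R] TT R B n :=
  PiTensorProduct.liftAlgHom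
    ((MultilinearMap.mkPiAlgebra R (Fin (n + 1)) (TT R B n)).compLinearMap
      (fun j => eeLin (σ j)))
    (by simp [eeLin_apply, ee_one])
    (by
      intro x y
      simp only [MultilinearMap.compLinearMap_apply, MultilinearMap.mkPiAlgebra_apply,
        eeLin_apply, Pi.mul_apply]
      rw [← Finset.prod_mul_distrib]
      exact Finset.prod_congr rfl fun j _ => (ee_mul _ _ _).symm)

lemma psi_tprod (σ : Fin (n + 1) → Fin (n + 1)) (g : Fin (n + 1) → B) :
    psi (R := R) σ (tprod R g) = ∏ j, ee (R := R) (σ j) (g j) := by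
  unfold psi
  simp [eeLin_apply]

lemma psi_ee (σ : Fin (n + 1) → Fin (n + 1)) (j : Fin (n + 1)) (b : B) :
    psi (R := R) σ (ee j b) = ee (σ j) b := by
  unfold ee
  rw [psi_tprod]
  rw [Finset.prod_eq_single j]
  · simp [ee]
  · intro i _ hij; simp [hij, ee_one]
  · simp

lemma psi_dd (σ : Fin (n + 1) → Fin (n + 1)) (r s : Fin (n + 1)) (b : B) :
    psi (R := R) σ (dd R B n r s b) = dd R B n (σ r) (σ s) b := by
  show psi σ (ee s b - ee r b) = ee (σ s) b - ee (σ r) b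
  rw [map_sub, psi_ee, psi_ee]

/-! ### Basic facts about the ideals -/

lemma dd_self (r : Fin (n + 1)) (b : B) : dd R B n r r b = 0 := sub_self _

lemma dd_cocycle (r s t : Fin (n + 1)) (b : B) :
    dd R B n r t b = dd R B n r s b + dd R B n s t b := by
  rw [dd_eq, dd_eq, dd_eq]; ring

lemma mem_Jrs (r s : Fin (n + 1)) (b : B) : dd R B n r s b ∈ Jrs R B n r s :=
  Ideal.subset_span ⟨b, rfl⟩

lemma Jrs_le_symm (r s : Fin (n + 1)) : Jrs R B n r s ≤ Jrs R B n s r := by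
  rw [Jrs, Ideal.span_le]
  rintro x ⟨b, rfl⟩
  have h : dd R B n r s b = -dd R B n s r b := by rw [dd_eq, dd_eq]; ring
  rw [h]
  exact neg_mem (mem_Jrs s r b)

lemma Jrs_symm (r s : Fin (n + 1)) : Jrs R B n r s = Jrs R B n s r :=
  le_antisymm (Jrs_le_symm r s) (Jrs_le_symm s r)

lemma Jrs_self_bot (r : Fin (n + 1)) : Jrs R B n r r = ⊥ := by
  rw [Jrs, ← le_bot_iff, Ideal.span_le]
  rintro x ⟨b, rfl⟩
  simp [dd_self]

lemma Jsq_le_Jsq' : Jsq R B n ≤ Jsq' R B n := by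
  rw [Jsq', Ideal.add_eq_sup]; exact le_sup_left

lemma Jdiag_le_Jsq' : Jdiag R B n ≤ Jsq' R B n := by
  rw [Jsq', Ideal.add_eq_sup]; exact le_sup_right

lemma Jrs_sq_le_Jsq {r s : Fin (n + 1)} (h : r < s) : Jrs R B n r s ^ 2 ≤ Jsq R B n := by
  have h1 : Jrs R B n r s ^ 2 ≤ ⨆ (_ : r < s), Jrs R B n r s ^ 2 := le_iSup (fun _ : r < s => Jrs R B n r s ^ 2) h
  have h2 : (⨆ (_ : r < s), Jrs R B n r s ^ 2)
      ≤ ⨆ s', ⨆ (_ : r < s'), Jrs R B n r s' ^ 2 :=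
    le_iSup (fun s' => ⨆ (_ : r < s'), Jrs R B n r s' ^ 2) s
  have h3 : (⨆ s', ⨆ (_ : r < s'), Jrs R B n r s' ^ 2)
      ≤ ⨆ r', ⨆ s', ⨆ (_ : r' < s'), Jrs R B n r' s' ^ 2 :=
    le_iSup (fun r' => ⨆ s', ⨆ (_ : r' < s'), Jrs R B n r' s' ^ 2) r
  exact (h1.trans h2).trans h3

lemma Jrs_sq_le (r s : Fin (n + 1)) : Jrs R B n r s ^ 2 ≤ Jsq' R B n := by
  rcases lt_trichotomy r s with h | h | h
  · exact le_trans (Jrs_sq_le_Jsq h) Jsq_le_Jsq'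
  · subst h; rw [Jrs_self_bot]; simp [pow_two]
  · rw [Jrs_symm]
    exact le_trans (Jrs_sq_le_Jsq h) Jsq_le_Jsq'

lemma Jtp_mul_self (r s : Fin (n + 1)) :
    Jt' R B n r s * Jt' R B n r s = ⊥ := by
  rw [Jt', ← Ideal.map_mul, ← le_bot_iff]
  have h1 : Jrs R B n r s * Jrs R B n r s ≤ Jsq' R B n := by
    rw [← pow_two]; exact Jrs_sq_le r s
  calc Ideal.map (Ideal.Quotient.mk (Jsq' R B n)) (Jrs R B n r s * Jrs R B n r s)
      ≤ Ideal.map (Ideal.Quotient.mk (Jsq' R B n)) (Jsq' R B n) := Ideal.map_mono h1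
    _ = ⊥ := Ideal.map_quotient_self _

lemma Jt'_le_sup (r s : Fin (n + 1)) :
    Jt' R B n r s ≤ Jt' R B n 0 r ⊔ Jt' R B n 0 s := by
  rw [Jt', Jt', Jt', ← Ideal.map_sup]
  refine Ideal.map_mono ?_
  rw [Jrs, Ideal.span_le]
  rintro x ⟨b, rfl⟩
  have h : dd R B n r s b = dd R B n 0 s b - dd R B n 0 r b := by
    rw [dd_eq, dd_eq, dd_eq]; ring
  rw [h]
  exact sub_mem (Ideal.mem_sup_right (mem_Jrs 0 s b)) (Ideal.mem_sup_left (mem_Jrs 0 r b))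

lemma K_le_sup (r s : Fin (n + 1)) :
    Jt' R B n 0 s ≤ Jt' R B n r s ⊔ Jt' R B n 0 r := by
  rw [Jt', Jt', Jt', ← Ideal.map_sup]
  refine Ideal.map_mono ?_
  rw [Jrs, Ideal.span_le]
  rintro x ⟨b, rfl⟩
  rw [dd_cocycle 0 r s b]
  exact add_mem (Ideal.mem_sup_right (mem_Jrs 0 r b)) (Ideal.mem_sup_left (mem_Jrs r s b))

lemma KK_le (r s : Fin (n + 1)) :
    Jt' R B n 0 r * Jt' R B n 0 s ≤ Jt' R B n r s := by
  rw [Jt', Jt', Jt', ← Ideal.map_mul]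
  have h1 : Jrs R B n 0 r * Jrs R B n 0 s ≤ Jrs R B n r s ⊔ Jsq' R B n := by
    rw [Jrs, Jrs, Ideal.span_mul_span']
    rw [Ideal.span_le]
    rintro x ⟨u, ⟨b, rfl⟩, v, ⟨c, rfl⟩, rfl⟩
    show dd R B n 0 r b * dd R B n 0 s c ∈ (Jrs R B n r s ⊔ Jsq' R B n : Ideal (TT R B n))
    have h : dd R B n 0 r b * dd R B n 0 s c
        = dd R B n 0 r b * dd R B n r s c + dd R B n 0 r b * dd R B n 0 r c := by
      rw [dd_cocycle 0 r s c]; ring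
    rw [h]
    refine add_mem (Ideal.mem_sup_left (Ideal.mul_mem_left _ _ (mem_Jrs r s c)))
      (Ideal.mem_sup_right (Jrs_sq_le 0 r ?_))
    rw [pow_two]
    exact Ideal.mul_mem_mul (mem_Jrs 0 r b) (mem_Jrs 0 r c)
  calc Ideal.map (Ideal.Quotient.mk (Jsq' R B n)) (Jrs R B n 0 r * Jrs R B n 0 s)
      ≤ Ideal.map (Ideal.Quotient.mk (Jsq' R B n)) (Jrs R B n r s ⊔ Jsq' R B n) :=
        Ideal.map_mono h1
    _ = Ideal.map (Ideal.Quotient.mk (Jsq' R B n)) (Jrs R B n r s) ⊔ ⊥ := by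
        rw [Ideal.map_sup, Ideal.map_quotient_self]
    _ ≤ _ := by simp

/-! ### The collapsing maps on the quotient -/

/-- slot map collapsing `k` to `0`. -/
def sig (k : Fin (n + 1)) : Fin (n + 1) → Fin (n + 1) := fun j => if j = k then 0 else j

lemma sig_zero (k : Fin (n + 1)) : sig k 0 = 0 := by
  unfold sig; split <;> rfl

lemma sig_self (k : Fin (n + 1)) : sig k k = 0 := if_pos rfl

lemma sig_ne {k j : Fin (n + 1)} (h : j ≠ k) : sig k j = j := if_neg h

lemma map_psi_Jrs (σ : Fin (n + 1) → Fin (n + 1)) (r s : Fin (n + 1)) :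
    Ideal.map (psi (R := R) (B := B) σ).toRingHom (Jrs R B n r s)
      ≤ Jrs R B n (σ r) (σ s) := by
  rw [Jrs, Ideal.map_span, Ideal.span_le]
  rintro x ⟨y, ⟨b, rfl⟩, rfl⟩
  show (psi σ) (dd R B n r s b) ∈ (Jrs R B n (σ r) (σ s) : Ideal (TT R B n))
  rw [psi_dd]
  exact mem_Jrs _ _ _

lemma map_psi_Jsq' (k : Fin (n + 1)) :
    Ideal.map (psi (R := R) (B := B) (sig k)).toRingHom (Jsq' R B n) ≤ Jsq' R B n := by
  rw [Jsq', Ideal.add_eq_sup, Ideal.map_sup]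
  apply sup_le
  · rw [Ideal.map_le_iff_le_comap, Jsq]
    refine iSup_le fun r => iSup_le fun s => iSup_le fun hrs => ?_
    rw [← Ideal.map_le_iff_le_comap, Ideal.map_pow]
    have h := map_psi_Jrs (R := R) (B := B) (sig k) r s
    calc Ideal.map (psi (R := R) (B := B) (sig k)).toRingHom (Jrs R B n r s) ^ 2
        ≤ Jrs R B n (sig k r) (sig k s) ^ 2 := by
          rw [pow_two, pow_two]; exact Ideal.mul_mono h h
      _ ≤ Jsq' R B n := Jrs_sq_le _ _
  · rw [Jdiag, Ideal.map_span, Ideal.span_le]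
    rintro x ⟨y, ⟨r, s, b, hr, hrs, rfl⟩, rfl⟩
    show (psi (sig k)) (dd R B n 0 r b * dd R B n 0 s b) ∈ (Jsq' R B n : Ideal (TT R B n))
    rw [_root_.map_mul, psi_dd, psi_dd, sig_zero]
    by_cases hrk : r = k
    · subst hrk; rw [sig_self, dd_self, zero_mul]; exact zero_mem _
    · rw [sig_ne hrk]
      by_cases hsk : s = k
      · subst hsk; rw [sig_self, dd_self, mul_zero]; exact zero_mem _
      · rw [sig_ne hsk]
        exact Jdiag_le_Jsq' (Ideal.subset_span ⟨r, s, b, hr, hrs, rfl⟩)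

/-- The induced endomorphism of the quotient ring. -/
def Phi (k : Fin (n + 1)) :
    (TT R B n ⧸ Jsq' R B n) →+* (TT R B n ⧸ Jsq' R B n) :=
  Ideal.quotientMap (Jsq' R B n) (psi (R := R) (B := B) (sig k)).toRingHom
    (Ideal.map_le_iff_le_comap.mp (map_psi_Jsq' k))

lemma Phi_mk (k : Fin (n + 1)) (x : TT R B n) :
    Phi (R := R) (B := B) k (Ideal.Quotient.mk (Jsq' R B n) x)
      = Ideal.Quotient.mk (Jsq' R B n) (psi (sig k) x) :=
  Ideal.quotientMap_mk

lemma sub_psi_mem (k : Fin (n + 1)) (x : TT R B n) :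
    x - psi (R := R) (sig k) x ∈ Jrs R B n 0 k := by
  classical
  induction x using PiTensorProduct.induction_on with
  | smul_tprod r g =>
    rw [map_smul, ← smul_sub]
    refine Submodule.smul_of_tower_mem _ r ?_
    rw [psi_tprod, tprod_eq_prod]
    rw [← Finset.mul_prod_erase Finset.univ _ (Finset.mem_univ k),
      ← Finset.mul_prod_erase Finset.univ (fun j => ee (R := R) (sig k j) (g j))
        (Finset.mem_univ k)]
    have hrest : (∏ j ∈ Finset.univ.erase k, ee (R := R) (sig k j) (g j))
        = ∏ j ∈ Finset.univ.erase k, ee (R := R) j (g j) :=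
      Finset.prod_congr rfl fun j hj => by rw [sig_ne (Finset.mem_erase.mp hj).1]
    rw [hrest, sig_self, ← sub_mul]
    have hd : ee (R := R) k (g k) - ee (R := R) (0 : Fin (n + 1)) (g k)
        = dd R B n 0 k (g k) := (dd_eq 0 k (g k)).symm
    rw [hd]
    exact Ideal.mul_mem_right _ _ (mem_Jrs 0 k (g k))
  | add x y hx hy =>
    have h : x + y - psi (R := R) (sig k) (x + y)
        = (x - psi (sig k) x) + (y - psi (sig k) y) := by
      rw [map_add]; ring
    rw [h]
    exact add_mem hx hy

lemma sub_Phi_mem (k : Fin (n + 1)) (q : TT R B n ⧸ Jsq' R B n) :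
    q - Phi (R := R) (B := B) k q ∈ Jt' R B n 0 k := by
  obtain ⟨x, rfl⟩ := Ideal.Quotient.mk_surjective q
  rw [Phi_mk, ← map_sub]
  exact Ideal.mem_map_of_mem _ (sub_psi_mem k x)

lemma Phi_mk_dd (k i : Fin (n + 1)) (hik : i ≠ k) (b : B) :
    Phi (R := R) (B := B) k (Ideal.Quotient.mk (Jsq' R B n) (dd R B n 0 i b))
      = Ideal.Quotient.mk (Jsq' R B n) (dd R B n 0 i b) := by
  rw [Phi_mk, psi_dd, sig_zero, sig_ne hik]

lemma Phi_zero_of_mem (k : Fin (n + 1)) {q : TT R B n ⧸ Jsq' R B n}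
    (hq : q ∈ Jt' R B n 0 k) : Phi (R := R) (B := B) k q = 0 := by
  rw [Jt', Jrs, Ideal.map_span] at hq
  induction hq using Submodule.span_induction with
  | mem g hg =>
    rcases hg with ⟨y, ⟨b, rfl⟩, rfl⟩
    rw [Phi_mk, psi_dd, sig_zero, sig_self, dd_self, map_zero]
  | zero => exact map_zero _
  | add x y _ _ hx hy => rw [map_add, hx, hy, add_zero]
  | smul a x _ hx => rw [smul_eq_mul, _root_.map_mul, hx, mul_zero]

/-! ### The main inclusion -/

lemma claimC (t : Finset (Fin (n + 1))) (ht : ∀ i ∈ t, (0 : Fin (n + 1)) < i)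
    (q : TT R B n ⧸ Jsq' R B n)
    (hq : ∀ i : Fin (n + 1), 0 < i → q ∈ Jt' R B n 0 i) :
    q ∈ ∏ i ∈ t, Jt' R B n 0 i := by
  classical
  induction t using Finset.induction with
  | empty => rw [Finset.prod_empty, Ideal.one_eq_top]; trivial
  | insert k t ha ih =>
    have hk0 : (0 : Fin (n + 1)) < k := ht k (Finset.mem_insert_self k t)
    have hqt : q ∈ ∏ i ∈ t, Jt' R B n 0 i :=
      ih (fun i hi => ht i (Finset.mem_insert_of_mem hi))
    set S : Fin (n + 1) → Set (TT R B n ⧸ Jsq' R B n) :=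
      fun i => (Ideal.Quotient.mk (Jsq' R B n)) '' {x | ∃ b : B, x = dd R B n 0 i b} with hS
    have hKspan : ∀ i, Jt' R B n 0 i = Ideal.span (S i) := fun i => by
      rw [Jt', Jrs, Ideal.map_span]
    have hprod : (∏ i ∈ t, Jt' R B n 0 i)
        = Ideal.span {x | ∃ f : Fin (n + 1) → (TT R B n ⧸ Jsq' R B n),
            (∀ i ∈ t, f i ∈ S i) ∧ x = ∏ i ∈ t, f i} := by
      rw [Finset.prod_congr rfl fun i _ => hKspan i, prod_span]
    have hfix : ∀ g ∈ {x | ∃ f : Fin (n + 1) → (TT R B n ⧸ Jsq' R B n),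
        (∀ i ∈ t, f i ∈ S i) ∧ x = ∏ i ∈ t, f i}, Phi (R := R) (B := B) k g = g := by
      rintro g ⟨f, hf, rfl⟩
      rw [map_prod]
      refine Finset.prod_congr rfl fun i hi => ?_
      rcases hf i hi with ⟨y, ⟨b, rfl⟩, hfi⟩
      rw [← hfi]
      exact Phi_mk_dd k i (by rintro rfl; exact ha hi) b
    have key := diff_mem_mul (Phi (R := R) (B := B) k) (Jt' R B n 0 k) (sub_Phi_mem k)
      _ hfix q (by rw [← hprod]; exact hqt)
    rw [Phi_zero_of_mem k (hq k hk0), sub_zero] at key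
    rw [Finset.prod_insert ha, hprod]
    exact key

lemma inf_le_prod :
    (⨅ (r : Fin (n + 1)) (s : Fin (n + 1)) (_ : r < s), Jt' R B n r s)
      ≤ ∏ i ∈ Finset.Ioi (0 : Fin (n + 1)), Jt' R B n 0 i := by
  intro q hq
  have hq' : ∀ i : Fin (n + 1), 0 < i → q ∈ Jt' R B n 0 i := by
    intro i hi
    have h1 := (Submodule.mem_iInf _).mp hq (0 : Fin (n + 1))
    have h2 := (Submodule.mem_iInf _).mp h1 i
    exact (Submodule.mem_iInf _).mp h2 hi
  exact claimC (Finset.Ioi 0) (fun i hi => Finset.mem_Ioi.mp hi) q hq'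

lemma prod_le_inf :
    (∏ i ∈ Finset.Ioi (0 : Fin (n + 1)), Jt' R B n 0 i)
      ≤ ⨅ (r : Fin (n + 1)) (s : Fin (n + 1)) (_ : r < s), Jt' R B n r s := by
  classical
  refine le_iInf fun r => le_iInf fun s => le_iInf fun hrs => ?_
  rcases eq_or_lt_of_le (Fin.zero_le r) with hr | hr
  · rw [← hr]
    exact prod_le_of_mem _ _ (Finset.mem_Ioi.mpr (hr ▸ hrs))
  · have hrI : r ∈ Finset.Ioi (0 : Fin (n + 1)) := Finset.mem_Ioi.mpr hr
    have hsI : s ∈ (Finset.Ioi (0 : Fin (n + 1))).erase r :=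
      Finset.mem_erase.mpr ⟨hrs.ne', Finset.mem_Ioi.mpr (hr.trans hrs)⟩
    calc (∏ i ∈ Finset.Ioi (0 : Fin (n + 1)), Jt' R B n 0 i)
        ≤ Jt' R B n 0 r * Jt' R B n 0 s := by
          rw [← Finset.mul_prod_erase _ _ hrI]
          exact Ideal.mul_mono le_rfl (prod_le_of_mem _ _ hsI)
      _ ≤ Jt' R B n r s := KK_le r s

/-! ### The chain product -/

lemma step (I : Ideal (TT R B n ⧸ Jsq' R B n)) (k s : Fin (n + 1))
    (hIk : I ≤ Jt' R B n 0 k) : I * Jt' R B n k s = I * Jt' R B n 0 s := by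
  have hbot : I * Jt' R B n 0 k = ⊥ := by
    rw [← le_bot_iff]
    calc I * Jt' R B n 0 k ≤ Jt' R B n 0 k * Jt' R B n 0 k := Ideal.mul_mono hIk le_rfl
      _ = ⊥ := Jtp_mul_self 0 k
  apply le_antisymm
  · calc I * Jt' R B n k s ≤ I * (Jt' R B n 0 k ⊔ Jt' R B n 0 s) :=
        Ideal.mul_mono_right (Jt'_le_sup k s)
      _ = I * Jt' R B n 0 k ⊔ I * Jt' R B n 0 s := Ideal.mul_sup _ _ _
      _ ≤ I * Jt' R B n 0 s := by rw [hbot, bot_sup_eq]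
  · calc I * Jt' R B n 0 s ≤ I * (Jt' R B n k s ⊔ Jt' R B n 0 k) :=
        Ideal.mul_mono_right (K_le_sup k s)
      _ = I * Jt' R B n k s ⊔ I * Jt' R B n 0 k := Ideal.mul_sup _ _ _
      _ ≤ I * Jt' R B n k s := by rw [hbot, sup_bot_eq]

lemma chain_eq :
    (∏ i ∈ Finset.Ioi (0 : Fin (n + 1)), Jt' R B n 0 i)
      = ∏ i : Fin n, Jt' R B n i.castSucc i.succ := by
  classical
  rw [Fin.prod_Ioi_zero]
  let KN : ℕ → Ideal (TT R B n ⧸ Jsq' R B n) := fun m =>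
    if h : m < n then Jt' R B n 0 (Fin.succ ⟨m, h⟩) else ⊤
  let FN : ℕ → Ideal (TT R B n ⧸ Jsq' R B n) := fun m =>
    if h : m < n then Jt' R B n (Fin.castSucc ⟨m, h⟩) (Fin.succ ⟨m, h⟩) else ⊤
  have hK : (∏ j : Fin n, Jt' R B n 0 (Fin.succ j)) = ∏ m ∈ Finset.range n, KN m := by
    rw [← Fin.prod_univ_eq_prod_range]
    exact Finset.prod_congr rfl fun j _ => by simp only [KN, j.isLt, dif_pos, Fin.eta]
  have hF : (∏ j : Fin n, Jt' R B n (Fin.castSucc j) (Fin.succ j))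
      = ∏ m ∈ Finset.range n, FN m := by
    rw [← Fin.prod_univ_eq_prod_range]
    exact Finset.prod_congr rfl fun j _ => by simp only [FN, j.isLt, dif_pos, Fin.eta]
  have main : ∀ m, m ≤ n →
      (∏ i ∈ Finset.range m, FN i) = ∏ i ∈ Finset.range m, KN i := by
    intro m
    induction m with
    | zero => intro _; simp
    | succ m ihm =>
      intro hm
      have hmn : m < n := hm
      rw [Finset.prod_range_succ, Finset.prod_range_succ, ihm hmn.le]
      by_cases hm0 : m = 0
      · subst hm0
        have hFK : FN 0 = KN 0 := by
          simp only [FN, KN, dif_pos hmn]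
          have h0 : Fin.castSucc (⟨0, hmn⟩ : Fin n) = (0 : Fin (n + 1)) := Fin.ext rfl
          rw [h0]
        rw [hFK]
      · have hmpos : 0 < m := Nat.pos_of_ne_zero hm0
        have hmn' : m - 1 < n := lt_of_le_of_lt (Nat.sub_le m 1) hmn
        have hsucc_eq : Fin.succ (⟨m - 1, hmn'⟩ : Fin n)
            = Fin.castSucc (⟨m, hmn⟩ : Fin n) := by
          apply Fin.ext
          simp only [Fin.val_succ, Fin.coe_castSucc]
          omega
        have hle : (∏ i ∈ Finset.range m, KN i)
            ≤ Jt' R B n 0 (Fin.castSucc (⟨m, hmn⟩ : Fin n)) := by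
          have hmem : m - 1 ∈ Finset.range m := Finset.mem_range.mpr (Nat.sub_lt hmpos one_pos)
          have h := prod_le_of_mem (Finset.range m) KN hmem
          have hKN : KN (m - 1) = Jt' R B n 0 (Fin.castSucc (⟨m, hmn⟩ : Fin n)) := by
            simp only [KN, dif_pos hmn']
            rw [hsucc_eq]
          rwa [hKN] at h
        simp only [FN, KN, dif_pos hmn]
        exact step _ _ _ hle
  rw [hK, hF]
  exact (main n le_rfl).symm

end Aux13

/-- in `T_n / J^{⟨2⟩}_{0n}` one has
`∏_{i=1}^{n} J̃_{0i} = ∏_{i=0}^{n-1} J̃_{i,i+1} = ⋂_{0 ≤ r < s ≤ n} J̃_{rs}`. -/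
theorem stmt13 (n : ℕ) (hn : 1 ≤ n) :
    (∏ i ∈ Finset.Ioi (0 : Fin (n + 1)), Jt' R B n 0 i
        = ∏ i : Fin n, Jt' R B n i.castSucc i.succ) ∧
      ∏ i ∈ Finset.Ioi (0 : Fin (n + 1)), Jt' R B n 0 i
        = ⨅ (r : Fin (n + 1)) (s : Fin (n + 1)) (_ : r < s), Jt' R B n r s := by
  exact ⟨Aux13.chain_eq, le_antisymm Aux13.prod_le_inf Aux13.inf_le_prod⟩

end
end

section
/- For 0 ≤ i ≤ n+1 let η_i : T_n → T_{n+1} be the R-algebra homomorphism which inserts the element 1 in position i of an elementary tensor. Each η_i maps the ideal J^{⟨2⟩}_{0n} into J^{⟨2⟩}_{0,n+1}, so that δ := Σ_{i=0}^{n+1} (−1)^i η_i induces an R-linear map T_n/J^{⟨2⟩}_{0n} → T_{n+1}/J^{⟨2⟩}_{0,n+1}. Moreover, for all b₀, b₁, …, bₙ ∈ B, one has δ( (b₀ ⊗ 1 ⊗ ⋯ ⊗ 1) · ∏_{i=1}^{n} d^{0,i}bᵢ ) = ∏_{i=1}^{n+1} d^{0,i}b_{i-1} in T_{n+1}/J^{⟨2⟩}_{0,n+1};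 that is, under the identification of Ψⁿ with the exterior power of Kähler differentials, δ corresponds to the exterior derivative of the de Rham complex. -/
open scoped TensorProduct
open PiTensorProduct

noncomputable section

variable (R B : Type*) [CommRing R] [CommRing B] [Algebra R B]

open Fin.NatCast

lemma insertNth_update' {n : ℕ} [DecidableEq (Fin (n + 1))] (i : Fin (n + 2)) (x : B) (f : Fin (n + 1) → B)
    (k : Fin (n + 1)) (y : B) :
    i.insertNth (α := fun _ => B) x (Function.update f k y)
      = Function.update (i.insertNth (α := fun _ => B) x f) (i.succAbove k) y := by
  ext j
  by_cases hj : j = i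
  · subst hj
    rw [Fin.insertNth_apply_same, Function.update_of_ne (Fin.ne_succAbove j k),
      Fin.insertNth_apply_same]
  · obtain ⟨m, rfl⟩ := Fin.exists_succAbove_eq hj
    by_cases hmk : m = k <;>
      simp [Function.update_apply, Fin.insertNth_apply_succAbove, Fin.succAbove_right_inj, hmk]

lemma insertNth_one_one {n : ℕ} (i : Fin (n + 2)) :
    (i.insertNth (α := fun _ => B) 1 fun _ => (1 : B)) = fun _ => (1 : B) := by
  ext j
  by_cases hj : j = i
  · subst hj; rw [Fin.insertNth_apply_same]
  · obtain ⟨m, rfl⟩ := Fin.exists_succAbove_eq hj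
    rw [Fin.insertNth_apply_succAbove]

lemma insertNth_mul' {n : ℕ} (i : Fin (n + 2)) (f g : Fin (n + 1) → B) :
    (i.insertNth (α := fun _ => B) 1 fun k => f k * g k) =
      fun j => (i.insertNth (α := fun _ => B) 1 f j) * (i.insertNth (α := fun _ => B) 1 g j) := by
  ext j
  by_cases hj : j = i
  · subst hj; rw [Fin.insertNth_apply_same, Fin.insertNth_apply_same,
      Fin.insertNth_apply_same, one_mul]
  · obtain ⟨m, rfl⟩ := Fin.exists_succAbove_eq hj
    rw [Fin.insertNth_apply_succAbove, Fin.insertNth_apply_succAbove,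
      Fin.insertNth_apply_succAbove]

def ins (n : ℕ) (i : Fin (n + 2)) :
    MultilinearMap R (fun _ : Fin (n + 1) => B) (TT R B (n + 1)) where
  toFun f := tprod R (i.insertNth 1 f)
  map_update_add' f k x y := by
    rw [insertNth_update', insertNth_update', insertNth_update']
    exact MultilinearMap.map_update_add (PiTensorProduct.tprod R) _ _ _ _
  map_update_smul' f k c x := by
    rw [insertNth_update', insertNth_update']
    exact MultilinearMap.map_update_smul (PiTensorProduct.tprod R) _ _ _ _

def eta (n : ℕ) (i : Fin (n + 2)) : TT R B n →ₐ[R] TT R B (n + 1) :=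
  liftAlgHom (ins R B n i)
    (by simp only [ins, MultilinearMap.coe_mk, one_def]
        congr 1
        exact insertNth_one_one B i)
    (fun f g => by
      simp only [ins, MultilinearMap.coe_mk, tprod_mul_tprod]
      congr 1
      exact insertNth_mul' B i f g)

lemma eta_tprod (n : ℕ) (i : Fin (n + 2)) (f : Fin (n + 1) → B) :
    eta R B n i (tprod R f) = PiTensorProduct.tprod R (i.insertNth 1 f) := by
  simp [eta, ins]
lemma insertNth_single {n : ℕ} (i : Fin (n + 2)) (s : Fin (n + 1)) (b : B) :
    i.insertNth (α := fun _ => B) 1 (fun k => if k = s then b else 1)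
      = fun j => if j = i.succAbove s then b else 1 := by
  ext j
  by_cases hj : j = i
  · subst hj
    rw [Fin.insertNth_apply_same, if_neg (Fin.ne_succAbove j s)]
  · obtain ⟨m, rfl⟩ := Fin.exists_succAbove_eq hj
    rw [Fin.insertNth_apply_succAbove]
    by_cases hms : m = s
    · subst hms; rw [if_pos rfl, if_pos rfl]
    · rw [if_neg hms, if_neg (fun h => hms (i.succAbove_right_injective h))]

lemma eta_dd (n : ℕ) (i : Fin (n + 2)) (r s : Fin (n + 1)) (b : B) :
    eta R B n i (dd R B n r s b)
      = dd R B (n + 1) (i.succAbove r) (i.succAbove s) b := by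
  unfold dd
  rw [map_sub, eta_tprod, eta_tprod, insertNth_single, insertNth_single]

lemma dd_split (n : ℕ) (r s : Fin (n + 1)) (b : B) :
    dd R B n r s b = dd R B n 0 s b - dd R B n 0 r b := by
  unfold dd; abel

lemma dd_zero_zero (n : ℕ) (b : B) : dd R B n 0 0 b = 0 := sub_self _

lemma mem_Jsq_of (n : ℕ) (r s : Fin (n + 1)) (hrs : r < s) (b b' : B) :
    dd R B n r s b * dd R B n r s b' ∈ Jsq R B n := by
  have h : dd R B n r s b * dd R B n r s b' ∈ (Jrs R B n r s) ^ 2 := by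
    rw [sq]
    exact Ideal.mul_mem_mul (Ideal.subset_span ⟨b, rfl⟩) (Ideal.subset_span ⟨b', rfl⟩)
  have hle : (Jrs R B n r s) ^ 2 ≤ Jsq R B n :=
    le_iSup_of_le r <| le_iSup_of_le s <| le_iSup_of_le hrs le_rfl
  exact hle h

lemma Jsq_le_Jsq' (n : ℕ) : Jsq R B n ≤ Jsq' R B n := by
  rw [Jsq', Submodule.add_eq_sup]; exact le_sup_left

lemma Jdiag_le_Jsq' (n : ℕ) : Jdiag R B n ≤ Jsq' R B n := by
  rw [Jsq', Submodule.add_eq_sup]; exact le_sup_right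

lemma mem_Jdiag (n : ℕ) (r s : Fin (n + 1)) (h0 : 0 < r) (hrs : r < s) (b : B) :
    dd R B n 0 r b * dd R B n 0 s b ∈ Jdiag R B n :=
  Ideal.subset_span ⟨r, s, b, h0, hrs, rfl⟩

lemma one_case (n : ℕ) (r s : Fin (n + 2)) (h1 : 1 < r) (hrs : r < s) (b : B) :
    dd R B (n + 1) 1 r b * dd R B (n + 1) 1 s b ∈ Jsq' R B (n + 1) := by
  have h01 : (0 : Fin (n + 2)) < 1 := Fin.one_pos'
  have e : dd R B (n + 1) 1 r b * dd R B (n + 1) 1 s b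
      = dd R B (n + 1) 0 r b * dd R B (n + 1) 0 s b
        - dd R B (n + 1) 0 1 b * dd R B (n + 1) 0 s b
        - dd R B (n + 1) 0 1 b * dd R B (n + 1) 0 r b
        + dd R B (n + 1) 0 1 b * dd R B (n + 1) 0 1 b := by
    rw [dd_split R B (n + 1) 1 r b, dd_split R B (n + 1) 1 s b]; ring
  rw [e]
  refine add_mem (sub_mem (sub_mem ?_ ?_) ?_) ?_
  · exact Jdiag_le_Jsq' R B _ (mem_Jdiag R B _ r s (h01.trans h1) hrs b)
  · exact Jdiag_le_Jsq' R B _ (mem_Jdiag R B _ 1 s h01 (h1.trans hrs) b)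
  · exact Jdiag_le_Jsq' R B _ (mem_Jdiag R B _ 1 r h01 h1 b)
  · exact Jsq_le_Jsq' R B _ (mem_Jsq_of R B _ 0 1 h01 b b)

lemma map_Jrs (n : ℕ) (i : Fin (n + 2)) (r s : Fin (n + 1)) :
    (Jrs R B n r s).map (eta R B n i)
      ≤ Jrs R B (n + 1) (i.succAbove r) (i.succAbove s) := by
  rw [Jrs, Ideal.map_span]
  refine Ideal.span_le.2 ?_
  rintro x ⟨y, ⟨b, rfl⟩, rfl⟩
  exact Ideal.subset_span ⟨b, eta_dd R B n i r s b⟩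

lemma eta_mem_Jsq' (n : ℕ) (i : Fin (n + 2)) :
    ∀ x ∈ Jsq' R B n, eta R B n i x ∈ Jsq' R B (n + 1) := by
  have main : Jsq' R B n ≤ (Jsq' R B (n + 1)).comap (eta R B n i) := by
    rw [Jsq', Submodule.add_eq_sup]
    refine sup_le ?_ ?_
    · refine iSup_le fun r => iSup_le fun s => iSup_le fun hrs => ?_
      rw [← Ideal.map_le_iff_le_comap, Ideal.map_pow]
      calc ((Jrs R B n r s).map (eta R B n i)) ^ 2
          ≤ (Jrs R B (n + 1) (i.succAbove r) (i.succAbove s)) ^ 2 :=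
            Ideal.pow_right_mono (map_Jrs R B n i r s) 2
        _ ≤ Jsq R B (n + 1) :=
            le_iSup_of_le (i.succAbove r) <| le_iSup_of_le (i.succAbove s) <|
              le_iSup_of_le (Fin.strictMono_succAbove i hrs) le_rfl
        _ ≤ Jsq' R B (n + 1) := Jsq_le_Jsq' R B (n + 1)
    · refine Ideal.span_le.2 ?_
      rintro x ⟨r, s, b, h0, hrs, rfl⟩
      refine Ideal.mem_comap.2 ?_
      rw [_root_.map_mul, eta_dd, eta_dd]
      by_cases hi : i = 0
      · subst hi
        rw [Fin.succAbove_zero]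
        rw [Fin.succ_zero_eq_one]
        refine one_case R B n r.succ s.succ ?_ ?_ b
        · rw [← Fin.succ_zero_eq_one, Fin.succ_lt_succ_iff]; exact h0
        · rw [Fin.succ_lt_succ_iff]; exact hrs
      · have hz : i.succAbove 0 = 0 := Fin.succAbove_ne_zero_zero hi
        rw [hz]
        refine Jdiag_le_Jsq' R B _ (mem_Jdiag R B _ _ _ ?_ ?_ b)
        · rw [← hz]; exact Fin.strictMono_succAbove i h0
        · exact Fin.strictMono_succAbove i hrs
  exact fun x hx => main hx
/-- The class of `d^{0,r} b` in the quotient `T_{n+1} / J'`. -/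
def qd (n : ℕ) (r : Fin (n + 2)) (b : B) : (TT R B (n + 1) ⧸ Jsq' R B (n + 1)) :=
  Ideal.Quotient.mk _ (dd R B (n + 1) 0 r b)

lemma qd_zero (n : ℕ) (b : B) : qd R B n 0 b = 0 := by
  rw [qd, dd_zero_zero, map_zero]

lemma qd_rel1 (n : ℕ) (r : Fin (n + 2)) (h : 0 < r) (b b' : B) :
    qd R B n r b * qd R B n r b' = 0 := by
  simp only [qd]
  rw [← _root_.map_mul]
  exact Ideal.Quotient.eq_zero_iff_mem.2 (Jsq_le_Jsq' R B _ (mem_Jsq_of R B _ 0 r h b b'))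

lemma qd_rel2 (n : ℕ) (r s : Fin (n + 2)) (h0 : 0 < r) (hrs : r < s) (b : B) :
    qd R B n r b * qd R B n s b = 0 := by
  simp only [qd]
  rw [← _root_.map_mul]
  exact Ideal.Quotient.eq_zero_iff_mem.2 (Jdiag_le_Jsq' R B _ (mem_Jdiag R B _ r s h0 hrs b))

lemma qd_dd (n : ℕ) (r s : Fin (n + 2)) (b : B) :
    Ideal.Quotient.mk (Jsq' R B (n + 1)) (dd R B (n + 1) r s b)
      = qd R B n s b - qd R B n r b := by
  rw [dd_split R B (n + 1) r s b, map_sub, qd, qd]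

lemma qd_rel3 (n : ℕ) (r s : Fin (n + 2)) (h0 : 0 < r) (hrs : r < s) (b b' : B) :
    qd R B n r b * qd R B n s b' = -(qd R B n r b' * qd R B n s b) := by
  have h0s : 0 < s := h0.trans hrs
  have key : (qd R B n s b - qd R B n r b) * (qd R B n s b' - qd R B n r b') = 0 := by
    rw [← qd_dd, ← qd_dd, ← _root_.map_mul]
    exact Ideal.Quotient.eq_zero_iff_mem.2
      (Jsq_le_Jsq' R B _ (mem_Jsq_of R B _ r s hrs b b'))
  linear_combination (-1 : TT R B (n + 1) ⧸ Jsq' R B (n + 1)) * key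
    + qd_rel1 R B n s h0s b b' + qd_rel1 R B n r h0 b b'

/-- `ℕ`-indexed version of `qd`. -/
def qdN (n : ℕ) (r : ℕ) (b : B) : (TT R B (n + 1) ⧸ Jsq' R B (n + 1)) :=
  qd R B n (r : Fin (n + 2)) b

lemma natCast_pos (m a : ℕ) (h1 : 1 ≤ a) (h2 : a < m + 2) : (0 : Fin (m + 2)) < (a : Fin (m + 2)) := by
  rw [Fin.lt_def, Fin.val_zero, Fin.val_cast_of_lt h2]; omega

lemma natCast_lt_natCast (m a b : ℕ) (hab : a < b) (h2 : b < m + 2) :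
    (a : Fin (m + 2)) < (b : Fin (m + 2)) := by
  rw [Fin.lt_def, Fin.val_cast_of_lt h2, Fin.val_cast_of_lt (by omega)]; exact hab

lemma qdN_rel1 (n : ℕ) (r : ℕ) (h1 : 1 ≤ r) (h2 : r ≤ n + 1) (b b' : B) :
    qdN R B n r b * qdN R B n r b' = 0 :=
  qd_rel1 R B n _ (natCast_pos n r h1 (by omega)) b b'

lemma qdN_rel2 (n : ℕ) (r s : ℕ) (h1 : 1 ≤ r) (hrs : r < s) (h2 : s ≤ n + 1) (b : B) :
    qdN R B n r b * qdN R B n s b = 0 :=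
  qd_rel2 R B n _ _ (natCast_pos n r h1 (by omega)) (natCast_lt_natCast n r s hrs (by omega)) b

lemma qdN_rel3 (n : ℕ) (r s : ℕ) (h1 : 1 ≤ r) (hrs : r < s) (h2 : s ≤ n + 1) (b b' : B) :
    qdN R B n r b * qdN R B n s b' = -(qdN R B n r b' * qdN R B n s b) :=
  qd_rel3 R B n _ _ (natCast_pos n r h1 (by omega)) (natCast_lt_natCast n r s hrs (by omega)) b b'

/-- expansion of a product of differences when the subtrahends annihilate each other -/
lemma prod_sub_linear {A : Type*} [CommRing A] {ι : Type*} [DecidableEq ι] (F : Finset ι)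
    (x y : ι → A) (h : ∀ a ∈ F, ∀ b ∈ F, y a * y b = 0) :
    ∏ k ∈ F, (x k - y k)
      = ∏ k ∈ F, x k - ∑ k ∈ F, y k * ∏ m ∈ F.erase k, x m := by
  induction F using Finset.cons_induction with
  | empty => simp
  | cons a F ha ih =>
    have h' : ∀ p ∈ F, ∀ q ∈ F, y p * y q = 0 := fun p hp q hq =>
      h p (Finset.mem_cons_of_mem hp) q (Finset.mem_cons_of_mem hq)
    rw [Finset.prod_cons, Finset.prod_cons, Finset.sum_cons, ih h']
    have e1 : (Finset.cons a F ha).erase a = F := by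
      rw [Finset.erase_cons]
    have e2 : ∑ k ∈ F, y k * ∏ m ∈ (Finset.cons a F ha).erase k, x m
        = ∑ k ∈ F, y k * (x a * ∏ m ∈ F.erase k, x m) := by
      refine Finset.sum_congr rfl fun k hk => ?_
      have hak : (Finset.cons a F ha).erase k
          = Finset.cons a (F.erase k) (fun hmem => ha (Finset.mem_of_mem_erase hmem)) := by
        ext z
        simp only [Finset.mem_erase, Finset.mem_cons]
        constructor
        · rintro ⟨hz, hz' | hz'⟩
          · exact Or.inl hz'
          · exact Or.inr ⟨hz, hz'⟩
        · rintro (rfl | ⟨hz, hz'⟩)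
          · exact ⟨fun hc => ha (hc ▸ hk), Or.inl rfl⟩
          · exact ⟨hz, Or.inr hz'⟩
      rw [hak, Finset.prod_cons]
    have e3 : ∑ k ∈ F, y k * (x a * ∏ m ∈ F.erase k, x m)
        = x a * ∑ k ∈ F, y k * ∏ m ∈ F.erase k, x m := by
      rw [Finset.mul_sum]
      exact Finset.sum_congr rfl fun k _ => by ring
    rw [e1, e2, e3]
    have hyaS : y a * (∑ k ∈ F, y k * ∏ m ∈ F.erase k, x m) = 0 := by
      rw [Finset.mul_sum]
      refine Finset.sum_eq_zero fun k hk => ?_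
      rw [← mul_assoc, h a (Finset.mem_cons_self a F) k (Finset.mem_cons_of_mem hk), zero_mul]
    linear_combination hyaS

/-- the rotation lemma -/
lemma rot (n : ℕ) (c : ℕ → B) (j : ℕ) (hj : j ≤ n) :
    ∏ k ∈ Finset.range (j + 1), qdN R B n (k + 1) (c (k + 1))
      = (-1 : TT R B (n + 1) ⧸ Jsq' R B (n + 1)) ^ j * qdN R B n 1 (c (j + 1))
          * ∏ k ∈ Finset.range j, qdN R B n (k + 2) (c (k + 1)) := by
  induction j with
  | zero => simp
  | succ j ih =>
    rw [Finset.prod_range_succ, ih (by omega), Finset.prod_range_succ]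
    have swap : qdN R B n 1 (c (j + 1)) * qdN R B n (j + 2) (c (j + 2))
        = -(qdN R B n 1 (c (j + 2)) * qdN R B n (j + 2) (c (j + 1))) :=
      qdN_rel3 R B n 1 (j + 2) le_rfl (by omega) (by omega) _ _
    linear_combination ((-1 : TT R B (n + 1) ⧸ Jsq' R B (n + 1)) ^ j
      * ∏ k ∈ Finset.range j, qdN R B n (k + 2) (c (k + 1))) * swap
def Draw (n : ℕ) : TT R B n →ₗ[R] (TT R B (n + 1) ⧸ Jsq' R B (n + 1)) where
  toFun x := Ideal.Quotient.mkₐ R (Jsq' R B (n + 1))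
    (∑ i : Fin (n + 2), (-1 : TT R B (n + 1)) ^ (i : ℕ) * eta R B n i x)
  map_add' x y := by
    simp only [map_add, mul_add, Finset.sum_add_distrib]
  map_smul' r x := by
    simp only [map_smul, mul_smul_comm, ← Finset.smul_sum, RingHom.id_apply]

lemma Draw_ker (n : ℕ) : ∀ x ∈ Jsq' R B n, Draw R B n x = 0 := by
  intro x hx
  have hmem : (∑ i : Fin (n + 2), (-1 : TT R B (n + 1)) ^ (i : ℕ) * eta R B n i x)
      ∈ Jsq' R B (n + 1) :=
    Submodule.sum_mem _ fun i _ => Ideal.mul_mem_left _ _ (eta_mem_Jsq' R B n i x hx)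
  show Ideal.Quotient.mkₐ R (Jsq' R B (n + 1)) _ = 0
  rw [Ideal.Quotient.mkₐ_eq_mk]
  exact Ideal.Quotient.eq_zero_iff_mem.2 hmem

def delta (n : ℕ) : (TT R B n ⧸ Jsq' R B n) →ₗ[R] (TT R B (n + 1) ⧸ Jsq' R B (n + 1)) :=
  Submodule.liftQ ((Jsq' R B n).restrictScalars R) (Draw R B n)
    (fun x hx => Draw_ker R B n x hx)

lemma delta_mk (n : ℕ) (x : TT R B n) :
    delta R B n (Ideal.Quotient.mk (Jsq' R B n) x)
      = Ideal.Quotient.mk (Jsq' R B (n + 1))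
          (∑ i : Fin (n + 2), (-1 : TT R B (n + 1)) ^ (i : ℕ) * eta R B n i x) := by
  have : delta R B n (Submodule.Quotient.mk x) = Draw R B n x :=
    Submodule.liftQ_apply _ _ _
  have e : (Ideal.Quotient.mk (Jsq' R B n)) x = Submodule.Quotient.mk x := rfl
  rw [e, this]
  simp [Draw]
lemma neg_one_pow_aux {A : Type*} [CommRing A] (L : ℕ) :
    (-1 : A) ^ (L + 1 + 1) * (-1) ^ L = 1 := by
  rw [← pow_add]
  have he : Even (L + 1 + 1 + L) := ⟨L + 1, by ring⟩
  exact he.neg_one_pow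

lemma perL (n : ℕ) (c : ℕ → B) (L : ℕ) (hL : L < n) :
    ∏ k ∈ Finset.range n, qdN R B n (if k ≤ L then k + 1 else k + 2) (c (k + 1))
      = (-1 : TT R B (n + 1) ⧸ Jsq' R B (n + 1)) ^ L * qdN R B n 1 (c (L + 1))
          * ∏ m ∈ (Finset.range n).erase L, qdN R B n (m + 2) (c (m + 1)) := by
  have hsplit : ∏ k ∈ Finset.range n, qdN R B n (if k ≤ L then k + 1 else k + 2) (c (k + 1))
      = (∏ k ∈ Finset.range (L + 1), qdN R B n (if k ≤ L then k + 1 else k + 2) (c (k + 1)))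
        * ∏ k ∈ Finset.Ico (L + 1) n, qdN R B n (if k ≤ L then k + 1 else k + 2) (c (k + 1)) := by
    rw [Finset.range_eq_Ico, Finset.range_eq_Ico]
    exact (Finset.prod_Ico_consecutive (M := TT R B (n + 1) ⧸ Jsq' R B (n + 1)) _ (Nat.zero_le (L + 1)) hL).symm
  have h1 : ∏ k ∈ Finset.range (L + 1), qdN R B n (if k ≤ L then k + 1 else k + 2) (c (k + 1))
      = ∏ k ∈ Finset.range (L + 1), qdN R B n (k + 1) (c (k + 1)) :=
    Finset.prod_congr rfl fun k hk => by
      rw [if_pos (Nat.lt_succ_iff.1 (Finset.mem_range.1 hk))]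
  have h2 : ∏ k ∈ Finset.Ico (L + 1) n, qdN R B n (if k ≤ L then k + 1 else k + 2) (c (k + 1))
      = ∏ k ∈ Finset.Ico (L + 1) n, qdN R B n (k + 2) (c (k + 1)) :=
    Finset.prod_congr rfl fun k hk => by
      rw [if_neg (by have := (Finset.mem_Ico.1 hk).1; omega)]
  have herase : (Finset.range n).erase L = Finset.range L ∪ Finset.Ico (L + 1) n := by
    ext z
    simp only [Finset.mem_erase, Finset.mem_range, Finset.mem_union, Finset.mem_Ico]
    omega
  have hdisj : Disjoint (Finset.range L) (Finset.Ico (L + 1) n) := by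
    rw [Finset.disjoint_left]
    intro z hz hz'
    rw [Finset.mem_range] at hz
    have := (Finset.mem_Ico.1 hz').1
    omega
  rw [hsplit, h1, h2, rot R B n c L (le_of_lt hL), herase, Finset.prod_union hdisj]
  ring

lemma master (n : ℕ) (c : ℕ → B) (z : TT R B (n + 1) ⧸ Jsq' R B (n + 1)) :
    (z + qdN R B n 1 (c 0))
        * ∏ k ∈ Finset.range n, (qdN R B n (k + 2) (c (k + 1)) - qdN R B n 1 (c (k + 1)))
      + ∑ L ∈ Finset.range (n + 1),
          (-1 : TT R B (n + 1) ⧸ Jsq' R B (n + 1)) ^ (L + 1)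
            * (z * ∏ k ∈ Finset.range n, qdN R B n (if k < L then k + 1 else k + 2) (c (k + 1)))
    = qdN R B n 1 (c 0) * ∏ k ∈ Finset.range n, qdN R B n (k + 2) (c (k + 1)) := by
  have hprod : ∏ k ∈ Finset.range n, (qdN R B n (k + 2) (c (k + 1)) - qdN R B n 1 (c (k + 1)))
      = ∏ k ∈ Finset.range n, qdN R B n (k + 2) (c (k + 1))
        - ∑ k ∈ Finset.range n, qdN R B n 1 (c (k + 1))
            * ∏ m ∈ (Finset.range n).erase k, qdN R B n (m + 2) (c (m + 1)) :=
    prod_sub_linear _ _ _ fun a _ b _ => qdN_rel1 R B n 1 le_rfl (by omega) _ _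
  rw [hprod, Finset.sum_range_succ']
  have h0 : ∏ k ∈ Finset.range n, qdN R B n (if k < 0 then k + 1 else k + 2) (c (k + 1))
      = ∏ k ∈ Finset.range n, qdN R B n (k + 2) (c (k + 1)) :=
    Finset.prod_congr rfl fun k _ => by rw [if_neg (Nat.not_lt_zero k)]
  have hz : ∑ L ∈ Finset.range n,
        (-1 : TT R B (n + 1) ⧸ Jsq' R B (n + 1)) ^ (L + 1 + 1)
          * (z * ∏ k ∈ Finset.range n, qdN R B n (if k < L + 1 then k + 1 else k + 2) (c (k + 1)))
      = z * ∑ k ∈ Finset.range n, qdN R B n 1 (c (k + 1))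
            * ∏ m ∈ (Finset.range n).erase k, qdN R B n (m + 2) (c (m + 1)) := by
    rw [Finset.mul_sum]
    refine Finset.sum_congr rfl fun L hL => ?_
    have hin : ∏ k ∈ Finset.range n, qdN R B n (if k < L + 1 then k + 1 else k + 2) (c (k + 1))
        = ∏ k ∈ Finset.range n, qdN R B n (if k ≤ L then k + 1 else k + 2) (c (k + 1)) :=
      Finset.prod_congr rfl fun k _ => by
        rcases Nat.lt_or_ge k (L + 1) with h | h
        · rw [if_pos h, if_pos (Nat.lt_succ_iff.1 h)]
        · rw [if_neg (Nat.not_lt.2 h), if_neg (by omega)]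
    rw [hin, perL R B n c L (Finset.mem_range.1 hL)]
    have hE : (-1 : TT R B (n + 1) ⧸ Jsq' R B (n + 1)) ^ (L + 1 + 1) * (-1) ^ L = 1 :=
      neg_one_pow_aux L
    linear_combination (z * (qdN R B n 1 (c (L + 1))
      * ∏ m ∈ (Finset.range n).erase L, qdN R B n (m + 2) (c (m + 1)))) * hE
  rw [h0, hz]
  have hY0 : qdN R B n 1 (c 0) * ∑ k ∈ Finset.range n, qdN R B n 1 (c (k + 1))
        * ∏ m ∈ (Finset.range n).erase k, qdN R B n (m + 2) (c (m + 1)) = 0 := by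
    rw [Finset.mul_sum]
    refine Finset.sum_eq_zero fun k _ => ?_
    rw [← mul_assoc, qdN_rel1 R B n 1 le_rfl (by omega), zero_mul]
  linear_combination (-1 : TT R B (n + 1) ⧸ Jsq' R B (n + 1)) * hY0
def E0 (n : ℕ) (b0 : B) : TT R B (n + 1) ⧸ Jsq' R B (n + 1) :=
  Ideal.Quotient.mk _ (tprod R (fun j : Fin (n + 2) => if j = 0 then b0 else 1))

lemma q_tprod_single (n : ℕ) (j : Fin (n + 2)) (b0 : B) :
    Ideal.Quotient.mk (Jsq' R B (n + 1)) (tprod R (fun x : Fin (n + 2) => if x = j then b0 else 1))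
      = E0 R B n b0 + qd R B n j b0 := by
  have h : tprod R (fun x : Fin (n + 2) => if x = j then b0 else 1)
      = tprod R (fun x : Fin (n + 2) => if x = (0 : Fin (n + 2)) then b0 else 1)
        + dd R B (n + 1) 0 j b0 := by
    rw [dd]; ring
  rw [h, map_add]; rfl

lemma eta_omega (n : ℕ) (i : Fin (n + 2)) (b : Fin (n + 1) → B) :
    Ideal.Quotient.mk (Jsq' R B (n + 1))
        (eta R B n i ((tprod R (fun k : Fin (n + 1) => if k = 0 then b 0 else 1)) *
          ∏ k ∈ Finset.Ioi (0 : Fin (n + 1)), dd R B n 0 k (b k)))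
      = (E0 R B n (b 0) + qd R B n (i.succAbove 0) (b 0))
          * ∏ k ∈ Finset.Ioi (0 : Fin (n + 1)),
              (qd R B n (i.succAbove k) (b k) - qd R B n (i.succAbove 0) (b k)) := by
  rw [_root_.map_mul, _root_.map_mul, map_prod, map_prod]
  congr 1
  · rw [eta_tprod, insertNth_single, q_tprod_single]
  · refine Finset.prod_congr rfl fun k _ => ?_
    rw [eta_dd, qd_dd]

lemma fin_succ_cast (n : ℕ) (k : Fin n) :
    ((((k : ℕ) + 1 : ℕ)) : Fin (n + 1)) = k.succ := by
  ext
  rw [Fin.val_succ, Fin.val_cast_of_lt (by omega)]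

lemma fin_succ_succ_cast (n : ℕ) (k : Fin n) :
    ((((k : ℕ) + 2 : ℕ)) : Fin (n + 2)) = k.succ.succ := by
  ext
  rw [Fin.val_succ, Fin.val_succ, Fin.val_cast_of_lt (by omega)]

lemma qdN_one (n : ℕ) (x : B) : qdN R B n 1 x = qd R B n 1 x := by
  rw [qdN, Nat.cast_one]

lemma sigma_cast (n : ℕ) (l : Fin (n + 1)) (k : Fin n) :
    (l.succ).succAbove k.succ
      = (((if (k : ℕ) < (l : ℕ) then (k : ℕ) + 1 else (k : ℕ) + 2 : ℕ)) : Fin (n + 2)) := by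
  rw [Fin.succ_succAbove_succ]
  rcases lt_or_ge ((k : ℕ)) ((l : ℕ)) with h | h
  · rw [if_pos h, Fin.succAbove_of_castSucc_lt _ _ (by rw [Fin.lt_def]; simpa using h)]
    ext
    rw [Fin.val_succ, Fin.coe_castSucc, Fin.val_cast_of_lt (by omega)]
  · rw [if_neg (Nat.not_lt.2 h), Fin.succAbove_of_le_castSucc _ _ (by rw [Fin.le_def]; simpa using h)]
    ext
    rw [Fin.val_succ, Fin.val_succ, Fin.val_cast_of_lt (by omega)]


set_option maxHeartbeats 1000000 in
/-- the insertion homomorphisms `η_i : T_n → T_{n+1}` (inserting `1` in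
position `i` of an elementary tensor) map `J^{⟨2⟩}_{0n}` into `J^{⟨2⟩}_{0,n+1}`, so that
`δ = Σ_{i=0}^{n+1} (−1)^i η_i` induces an `R`-linear map on the quotients; moreover, on the
element `(b₀ ⊗ 1 ⊗ ⋯ ⊗ 1) · ∏_{i=1}^{n} d^{0,i}bᵢ` this induced map takes the value
`∏_{i=1}^{n+1} d^{0,i}b_{i-1}`: under the identification of `Ψⁿ` with the exterior power of
Kähler differentials, `δ` corresponds to the exterior derivative of the de Rham complex. -/
theorem stmt17 (n : ℕ) (hn : 1 ≤ n) :
    ∃ η : (i : Fin (n + 2)) → (TT R B n →ₐ[R] TT R B (n + 1)),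
      (∀ (i : Fin (n + 2)) (f : Fin (n + 1) → B),
        η i (tprod R f) = PiTensorProduct.tprod R (i.insertNth 1 f)) ∧
      (∀ i : Fin (n + 2), ∀ x ∈ Jsq' R B n, η i x ∈ Jsq' R B (n + 1)) ∧
      ∃ δ : (TT R B n ⧸ Jsq' R B n) →ₗ[R] (TT R B (n + 1) ⧸ Jsq' R B (n + 1)),
        (∀ x : TT R B n,
          δ (Ideal.Quotient.mk (Jsq' R B n) x)
            = Ideal.Quotient.mk (Jsq' R B (n + 1))
                (∑ i : Fin (n + 2), (-1 : TT R B (n + 1)) ^ (i : ℕ) * η i x)) ∧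
        ∀ b : Fin (n + 1) → B,
          δ (Ideal.Quotient.mk (Jsq' R B n)
              ((tprod R (fun k : Fin (n + 1) => if k = 0 then b 0 else 1)) *
                ∏ i ∈ Finset.Ioi (0 : Fin (n + 1)), dd R B n 0 i (b i)))
            = Ideal.Quotient.mk (Jsq' R B (n + 1))
                (∏ k : Fin (n + 1), dd R B (n + 1) 0 k.succ (b k)) := by
  refine ⟨eta R B n, fun i f => eta_tprod R B n i f,
    fun i x hx => eta_mem_Jsq' R B n i x hx, delta R B n,
    fun x => delta_mk R B n x, fun b => ?_⟩
  rw [delta_mk, map_sum]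
  set c : ℕ → B := fun m => b ((m : ℕ) : Fin (n + 1)) with hc
  have hc0 : c 0 = b 0 := by rw [hc]; norm_num
  have hcb : ∀ k : Fin n, c ((k : ℕ) + 1) = b k.succ := fun k => by
    rw [hc]; simp only [fin_succ_cast]
  -- right-hand side
  have hrhs : Ideal.Quotient.mk (Jsq' R B (n + 1))
        (∏ k : Fin (n + 1), dd R B (n + 1) 0 k.succ (b k))
      = qdN R B n 1 (c 0) * ∏ k ∈ Finset.range n, qdN R B n (k + 2) (c (k + 1)) := by
    rw [map_prod]
    have e1 : ∀ k : Fin (n + 1),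
        Ideal.Quotient.mk (Jsq' R B (n + 1)) (dd R B (n + 1) 0 k.succ (b k))
          = qdN R B n ((k : ℕ) + 1) (c (k : ℕ)) := by
      intro k
      rw [qdN, fin_succ_cast (n + 1) k]
      have : c (k : ℕ) = b k := by simp only [hc, Fin.cast_val_eq_self]
      rw [this]; rfl
    calc ∏ k : Fin (n + 1), Ideal.Quotient.mk (Jsq' R B (n + 1)) (dd R B (n + 1) 0 k.succ (b k))
        = ∏ k : Fin (n + 1), qdN R B n ((k : ℕ) + 1) (c (k : ℕ)) :=
          Finset.prod_congr rfl fun k _ => e1 k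
      _ = ∏ m ∈ Finset.range (n + 1), qdN R B n (m + 1) (c m) :=
          Fin.prod_univ_eq_prod_range (fun m => qdN R B n (m + 1) (c m)) (n + 1)
      _ = (∏ m ∈ Finset.range n, qdN R B n (m + 1 + 1) (c (m + 1))) * qdN R B n (0 + 1) (c 0) :=
          Finset.prod_range_succ' _ n
      _ = qdN R B n 1 (c 0) * ∏ k ∈ Finset.range n, qdN R B n (k + 2) (c (k + 1)) := by
          rw [mul_comm]
  rw [hrhs]
  -- the term i = 0
  have t0 : Ideal.Quotient.mk (Jsq' R B (n + 1))
        (eta R B n 0 ((tprod R (fun k : Fin (n + 1) => if k = 0 then b 0 else 1)) *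
          ∏ k ∈ Finset.Ioi (0 : Fin (n + 1)), dd R B n 0 k (b k)))
      = (E0 R B n (c 0) + qdN R B n 1 (c 0))
          * ∏ k ∈ Finset.range n, (qdN R B n (k + 2) (c (k + 1)) - qdN R B n 1 (c (k + 1))) := by
    rw [eta_omega]
    simp only [Fin.succAbove_zero, Fin.succ_zero_eq_one, ← qdN_one]
    rw [← hc0]
    suffices h : ∏ k ∈ Finset.Ioi (0 : Fin (n + 1)),
        (qd R B n k.succ (b k) - qdN R B n 1 (b k))
      = ∏ k ∈ Finset.range n, (qdN R B n (k + 2) (c (k + 1)) - qdN R B n 1 (c (k + 1))) by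
      rw [h]
    rw [Fin.prod_Ioi_zero]
    calc ∏ k : Fin n, (qd R B n k.succ.succ (b k.succ) - qdN R B n 1 (b k.succ))
        = ∏ k : Fin n, (qdN R B n ((k : ℕ) + 2) (c ((k : ℕ) + 1))
            - qdN R B n 1 (c ((k : ℕ) + 1))) := by
          refine Finset.prod_congr rfl fun k _ => ?_
          rw [hcb k]
          simp only [qdN]
          rw [fin_succ_succ_cast]
      _ = ∏ k ∈ Finset.range n, (qdN R B n (k + 2) (c (k + 1)) - qdN R B n 1 (c (k + 1))) :=
          Fin.prod_univ_eq_prod_range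
            (fun m => qdN R B n (m + 2) (c (m + 1)) - qdN R B n 1 (c (m + 1))) n
  -- the terms i = l.succ
  have tl : ∀ l : Fin (n + 1), Ideal.Quotient.mk (Jsq' R B (n + 1))
        (eta R B n l.succ ((tprod R (fun k : Fin (n + 1) => if k = 0 then b 0 else 1)) *
          ∏ k ∈ Finset.Ioi (0 : Fin (n + 1)), dd R B n 0 k (b k)))
      = E0 R B n (c 0)
          * ∏ k ∈ Finset.range n, qdN R B n (if k < (l : ℕ) then k + 1 else k + 2) (c (k + 1)) := by
    intro l
    rw [eta_omega]
    simp only [Fin.succ_succAbove_zero, qd_zero, add_zero, sub_zero]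
    rw [← hc0]
    suffices h : ∏ k ∈ Finset.Ioi (0 : Fin (n + 1)), qd R B n (l.succ.succAbove k) (b k)
        = ∏ k ∈ Finset.range n, qdN R B n (if k < (l : ℕ) then k + 1 else k + 2) (c (k + 1)) by
      rw [h]
    rw [Fin.prod_Ioi_zero]
    calc ∏ k : Fin n, qd R B n (l.succ.succAbove k.succ) (b k.succ)
        = ∏ k : Fin n, qdN R B n (if (k : ℕ) < (l : ℕ) then (k : ℕ) + 1 else (k : ℕ) + 2)
            (c ((k : ℕ) + 1)) := by
          refine Finset.prod_congr rfl fun k _ => ?_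
          rw [hcb k]
          simp only [qdN]
          rw [sigma_cast]
      _ = ∏ k ∈ Finset.range n, qdN R B n (if k < (l : ℕ) then k + 1 else k + 2) (c (k + 1)) :=
          Fin.prod_univ_eq_prod_range
            (fun m => qdN R B n (if m < (l : ℕ) then m + 1 else m + 2) (c (m + 1))) n
  -- assemble
  have push : ∀ i : Fin (n + 2),
      Ideal.Quotient.mk (Jsq' R B (n + 1))
          ((-1 : TT R B (n + 1)) ^ (i : ℕ) * eta R B n i
            ((tprod R (fun k : Fin (n + 1) => if k = 0 then b 0 else 1)) *
              ∏ k ∈ Finset.Ioi (0 : Fin (n + 1)), dd R B n 0 k (b k)))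
        = (-1 : TT R B (n + 1) ⧸ Jsq' R B (n + 1)) ^ (i : ℕ)
            * Ideal.Quotient.mk (Jsq' R B (n + 1)) (eta R B n i
              ((tprod R (fun k : Fin (n + 1) => if k = 0 then b 0 else 1)) *
                ∏ k ∈ Finset.Ioi (0 : Fin (n + 1)), dd R B n 0 k (b k))) := fun i => by
    rw [_root_.map_mul, map_pow, map_neg, _root_.map_one]
  rw [Finset.sum_congr rfl fun i _ => push i]
  rw [Fin.sum_univ_succ]
  rw [t0]
  have e4 : ∀ l : Fin (n + 1),
      (-1 : TT R B (n + 1) ⧸ Jsq' R B (n + 1)) ^ ((l.succ : Fin (n + 2)) : ℕ)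
          * Ideal.Quotient.mk (Jsq' R B (n + 1))
            (eta R B n l.succ ((tprod R (fun k : Fin (n + 1) => if k = 0 then b 0 else 1)) *
              ∏ k ∈ Finset.Ioi (0 : Fin (n + 1)), dd R B n 0 k (b k)))
        = (-1) ^ ((l : ℕ) + 1) * (E0 R B n (c 0)
            * ∏ k ∈ Finset.range n, qdN R B n (if k < (l : ℕ) then k + 1 else k + 2) (c (k + 1))) := by
    intro l
    rw [tl l, Fin.val_succ]
  rw [Finset.sum_congr rfl fun l _ => e4 l]
  have e5 : ∑ l : Fin (n + 1), (-1 : TT R B (n + 1) ⧸ Jsq' R B (n + 1)) ^ ((l : ℕ) + 1)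
        * (E0 R B n (c 0)
          * ∏ k ∈ Finset.range n, qdN R B n (if k < (l : ℕ) then k + 1 else k + 2) (c (k + 1)))
      = ∑ L ∈ Finset.range (n + 1), (-1) ^ (L + 1)
        * (E0 R B n (c 0)
          * ∏ k ∈ Finset.range n, qdN R B n (if k < L then k + 1 else k + 2) (c (k + 1))) :=
    Fin.sum_univ_eq_sum_range
      (fun L => (-1 : TT R B (n + 1) ⧸ Jsq' R B (n + 1)) ^ (L + 1)
        * (E0 R B n (c 0)
          * ∏ k ∈ Finset.range n, qdN R B n (if k < L then k + 1 else k + 2) (c (k + 1)))) (n + 1)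
  rw [e5]
  have := master R B n c (E0 R B n (c 0))
  rw [Fin.val_zero, pow_zero, one_mul]
  exact this
end
end

section
/- Let R be a commutative ring and let F be a functor from the category of commutative R-algebras to the category of groups. Assume that for all R-modules M and N, the canonical map F(D_R(M × N)) → F(D_R(M)) ×_{F(R)} F(D_R(N)), induced by the algebra homomorphism D_R(M × N) → D_R(M) (resp. → D_R(N)) coming from the projection M × N → M (resp. → N), and where the maps to F(R) are induced by the augmentations D_R(M) → R and D_R(N) → R, is a bijection. Then for every R-module M, the kernel of the group homomorphism F(D_R(M)) → F(R) induced by the augmentation is a commutative subgroup of F(D_R(M)). -/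
universe u v

noncomputable section

/-- For a commutative ring `R` and an `R`-module `M`, the action of `Rᵐᵒᵖ` on `M`
through `R`; this makes the trivial square-zero extension `TrivSqZeroExt R M` (i.e.
`D_R(M) = R ⊕ Mε`) a commutative `R`-algebra. -/
noncomputable instance (priority := low) opModule (R M : Type*) [CommSemiring R]
    [AddCommMonoid M] [Module R M] : Module Rᵐᵒᵖ M :=
  Module.compHom M ((RingHom.id R).fromOpposite mul_comm)

instance (priority := low) opCentral (R M : Type*) [CommSemiring R] [AddCommMonoid M]
    [Module R M] : IsCentralScalar R M := ⟨fun _ _ => rfl⟩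

instance (priority := low) opComm (R M : Type*) [CommSemiring R] [AddCommMonoid M]
    [Module R M] : SMulCommClass R Rᵐᵒᵖ M := ⟨fun r s m => smul_comm r s.unop m⟩

/-- The data of a functor from commutative `R`-algebras (in the same universe as `R`) to
groups: a group `obj A` for every commutative `R`-algebra `A`, and a map
`obj A → obj B` for every `R`-algebra homomorphism `A →ₐ[R] B`. -/
structure GrpFunctorData (R : Type u) [CommRing R] : Type (u + 1) where
  obj : ∀ (A : Type u) [CommRing A] [Algebra R A], Type u
  grp : ∀ (A : Type u) [CommRing A] [Algebra R A], Group (obj A)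
  map : ∀ {A B : Type u} [CommRing A] [Algebra R A] [CommRing B] [Algebra R B],
    (A →ₐ[R] B) → obj A → obj B

attribute [instance] GrpFunctorData.grp

/-- A functor from commutative `R`-algebras to groups: the maps induced by `R`-algebra
homomorphisms are group homomorphisms, compatible with identities and composition. -/
structure GrpFunctor (R : Type u) [CommRing R] extends GrpFunctorData R : Type (u + 1) where
  map_mul : ∀ {A B : Type u} [CommRing A] [Algebra R A] [CommRing B] [Algebra R B]
    (f : A →ₐ[R] B) (x y : toGrpFunctorData.obj A),
    toGrpFunctorData.map f (x * y) = toGrpFunctorData.map f x * toGrpFunctorData.map f y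
  map_id : ∀ (A : Type u) [CommRing A] [Algebra R A] (x : toGrpFunctorData.obj A),
    toGrpFunctorData.map (AlgHom.id R A) x = x
  map_comp : ∀ {A B C : Type u} [CommRing A] [Algebra R A] [CommRing B] [Algebra R B]
    [CommRing C] [Algebra R C] (f : A →ₐ[R] B) (g : B →ₐ[R] C)
    (x : toGrpFunctorData.obj A),
    toGrpFunctorData.map (g.comp f) x = toGrpFunctorData.map g (toGrpFunctorData.map f x)

/-- let `F` be a functor from commutative `R`-algebras to groups.  If, for all
`R`-modules `M` and `N`, the canonical map `F(D_R(M × N)) → F(D_R(M)) ×_{F(R)} F(D_R(N))`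
(induced by the two projections, the maps to `F(R)` being induced by the augmentations) is a
bijection, then for every `R`-module `M` the kernel of `F(D_R(M)) → F(R)` is a commutative
subgroup of `F(D_R(M))`; i.e. any two of its elements commute. -/
theorem stmt18 (R : Type u) [CommRing R] (F : GrpFunctor R)
    (hF : ∀ (M N : Type u) [AddCommGroup M] [Module R M] [AddCommGroup N] [Module R N],
      Function.Injective
        (fun x : F.obj (TrivSqZeroExt R (M × N)) =>
          ((F.map (TrivSqZeroExt.map (LinearMap.fst R M N)) x,
            F.map (TrivSqZeroExt.map (LinearMap.snd R M N)) x) :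
            F.obj (TrivSqZeroExt R M) × F.obj (TrivSqZeroExt R N))) ∧
      Set.range
        (fun x : F.obj (TrivSqZeroExt R (M × N)) =>
          ((F.map (TrivSqZeroExt.map (LinearMap.fst R M N)) x,
            F.map (TrivSqZeroExt.map (LinearMap.snd R M N)) x) :
            F.obj (TrivSqZeroExt R M) × F.obj (TrivSqZeroExt R N)))
        = {p | F.map (TrivSqZeroExt.fstHom R R M) p.1
            = F.map (TrivSqZeroExt.fstHom R R N) p.2})
    (M : Type u) [AddCommGroup M] [Module R M]
    (x y : F.obj (TrivSqZeroExt R M))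
    (hx : F.map (TrivSqZeroExt.fstHom R R M) x = 1)
    (hy : F.map (TrivSqZeroExt.fstHom R R M) y = 1) :
    x * y = y * x := by
  classical
  obtain ⟨hinj, -⟩ := hF M M
  -- F.map sends 1 to 1
  have hone : ∀ {A B : Type u} [CommRing A] [Algebra R A] [CommRing B] [Algebra R B]
      (f : A →ₐ[R] B), F.map f (1 : F.obj A) = 1 := by
    intro A B _ _ _ _ f
    have h := F.map_mul f 1 1
    rw [mul_one] at h
    have := mul_left_cancel (a := F.map f (1 : F.obj A))
      (by rw [mul_one, ← h] : F.map f (1 : F.obj A) * 1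
        = F.map f (1 : F.obj A) * F.map f (1 : F.obj A))
    exact this.symm
  -- composition helper
  have hc : ∀ {N P : Type u} [AddCommGroup N] [Module R N] [AddCommGroup P] [Module R P]
      (f : N →ₗ[R] P) (g : P →ₗ[R] M) (z : F.obj (TrivSqZeroExt R N)),
      F.map (TrivSqZeroExt.map g) (F.map (TrivSqZeroExt.map f) z)
        = F.map (TrivSqZeroExt.map (g ∘ₗ f)) z := by
    intro N P _ _ _ _ f g z
    rw [TrivSqZeroExt.map_comp_map, F.map_comp]
  -- map of the zero linear map factors through the augmentation
  have hzero : (TrivSqZeroExt.map (0 : M →ₗ[R] M))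
      = (TrivSqZeroExt.inlAlgHom R R M).comp (TrivSqZeroExt.fstHom R R M) := by
    apply TrivSqZeroExt.algHom_ext
    intro m
    simp
  have hzx : F.map (TrivSqZeroExt.map (0 : M →ₗ[R] M)) x = 1 := by
    rw [hzero, F.map_comp, hx, hone]
  have hzy : F.map (TrivSqZeroExt.map (0 : M →ₗ[R] M)) y = 1 := by
    rw [hzero, F.map_comp, hy, hone]
  set x' := F.map (TrivSqZeroExt.map (LinearMap.inl R M M)) x with hx'
  set y' := F.map (TrivSqZeroExt.map (LinearMap.inr R M M)) y with hy'
  have hfi : (LinearMap.fst R M M) ∘ₗ (LinearMap.inl R M M) = LinearMap.id := by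
    ext m; simp
  have hfr : (LinearMap.fst R M M) ∘ₗ (LinearMap.inr R M M) = 0 := by
    ext m; simp
  have hsi : (LinearMap.snd R M M) ∘ₗ (LinearMap.inl R M M) = 0 := by
    ext m; simp
  have hsr : (LinearMap.snd R M M) ∘ₗ (LinearMap.inr R M M) = LinearMap.id := by
    ext m; simp
  have hfx : F.map (TrivSqZeroExt.map (LinearMap.fst R M M)) x' = x := by
    rw [hx', hc, hfi, TrivSqZeroExt.map_id, F.map_id]
  have hfy : F.map (TrivSqZeroExt.map (LinearMap.fst R M M)) y' = 1 := by
    rw [hy', hc, hfr, hzy]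
  have hsx : F.map (TrivSqZeroExt.map (LinearMap.snd R M M)) x' = 1 := by
    rw [hx', hc, hsi, hzx]
  have hsy : F.map (TrivSqZeroExt.map (LinearMap.snd R M M)) y' = y := by
    rw [hy', hc, hsr, TrivSqZeroExt.map_id, F.map_id]
  have hcomm : x' * y' = y' * x' := by
    apply hinj
    simp only [F.map_mul, hfx, hfy, hsx, hsy, one_mul, mul_one, Prod.mk.injEq]
  -- sum map
  set σ : (M × M) →ₗ[R] M := LinearMap.fst R M M + LinearMap.snd R M M with hσ
  have hσi : σ ∘ₗ (LinearMap.inl R M M) = LinearMap.id := by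
    ext m; simp [hσ]
  have hσr : σ ∘ₗ (LinearMap.inr R M M) = LinearMap.id := by
    ext m; simp [hσ]
  have hσx : F.map (TrivSqZeroExt.map σ) x' = x := by
    rw [hx', hc, hσi, TrivSqZeroExt.map_id, F.map_id]
  have hσy : F.map (TrivSqZeroExt.map σ) y' = y := by
    rw [hy', hc, hσr, TrivSqZeroExt.map_id, F.map_id]
  calc x * y = F.map (TrivSqZeroExt.map σ) x' * F.map (TrivSqZeroExt.map σ) y' := by
        rw [hσx, hσy]
    _ = F.map (TrivSqZeroExt.map σ) (x' * y') := (F.map_mul _ _ _).symm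
    _ = F.map (TrivSqZeroExt.map σ) (y' * x') := by rw [hcomm]
    _ = F.map (TrivSqZeroExt.map σ) y' * F.map (TrivSqZeroExt.map σ) x' := F.map_mul _ _ _
    _ = y * x := by rw [hσx, hσy]


end
end
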